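/- arXiv:1605.03221 — 7 statements merged into one kernel-verified Lean document; each statement's English description precedes it below -/
import Mathlib

section
/- Let a > 0 and let u : ℝ → ℂ be smooth with support contained in [e^{-a}, e^{a}] ⊂ (0,∞). Then the Mellin transform s ↦ mellin u s is an entire function of s, and for every m ∈ ℕ there exists a constant C_m > 0 such that |mellin u s| ≤ C_m (1+|s|)^{-m} e^{a·|Re s|} for all s ∈ ℂ. -/
open MeasureTheory Complex Set Filter

namespace MellinPW

variable {a : ℝ}

lemma eps_pos (a : ℝ) : 0 < Real.exp (-a) := Real.exp_pos _

/-- integrand is integrable -/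
lemma integrable_aux (a : ℝ) (v : ℝ → ℂ) (hv : Continuous v)
    (hs' : Function.support v ⊆ Set.Icc (Real.exp (-a)) (Real.exp a)) (s : ℂ) :
    Integrable (fun t : ℝ => (t : ℂ) ^ (s - 1) * v t) := by
  have hsub : Function.support (fun t : ℝ => (t : ℂ) ^ (s - 1) * v t)
      ⊆ Set.Icc (Real.exp (-a)) (Real.exp a) := by
    intro t ht
    apply hs'
    intro h0
    exact ht (by simp [h0])
  rw [← integrableOn_iff_integrable_of_support_subset hsub]
  apply ContinuousOn.integrableOn_compact isCompact_Icc
  apply ContinuousOn.mul _ hv.continuousOn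
  intro t ht
  exact (Complex.continuousAt_ofReal_cpow_const t (s - 1)
    (Or.inr (ne_of_gt (lt_of_lt_of_le (Real.exp_pos _) ht.1)))).continuousWithinAt

lemma mellinConvergent_aux (a : ℝ) (v : ℝ → ℂ) (hv : Continuous v)
    (hs' : Function.support v ⊆ Set.Icc (Real.exp (-a)) (Real.exp a)) (s : ℂ) :
    MellinConvergent v s := by
  have := (integrable_aux a v hv hs' s).integrableOn (s := Set.Ioi 0)
  simpa [MellinConvergent, smul_eq_mul] using this

/-- basic exponential bound -/
lemma mellin_bound_aux (a : ℝ) (ha : 0 < a) (v : ℝ → ℂ) (hv : Continuous v)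
    (hs' : Function.support v ⊆ Set.Icc (Real.exp (-a)) (Real.exp a)) (M : ℝ)
    (hM : ∀ t, ‖v t‖ ≤ M) (s : ℂ) :
    ‖mellin v s‖ ≤ M * Real.exp (2 * a) * Real.exp (a * |s.re|) := by
  have hM0 : 0 ≤ M := le_trans (norm_nonneg _) (hM 0)
  set ε := Real.exp (-a) with hε
  set E := Real.exp a with hE
  have hεE : ε ≤ E := Real.exp_le_exp.mpr (by linarith)
  have hsubIoi : Set.Icc ε E ⊆ Set.Ioi (0:ℝ) := fun t ht => lt_of_lt_of_le (Real.exp_pos _) ht.1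
  have hsub : Function.support (fun t : ℝ => (t : ℂ) ^ (s - 1) • v t) ⊆ Set.Icc ε E := by
    intro t ht
    apply hs'
    intro h0
    exact ht (by simp [h0])
  have h1 : mellin v s = ∫ t in Set.Icc ε E, (t : ℂ) ^ (s - 1) • v t := by
    rw [mellin, setIntegral_eq_integral_of_forall_compl_eq_zero
      (fun x hx => Function.notMem_support.mp (fun hs => hx (hsubIoi (hsub hs)))),
      ← setIntegral_eq_integral_of_forall_compl_eq_zero
      (fun x hx => Function.notMem_support.mp (fun hs => hx (hsub hs)))]
  rw [h1]
  have key : ∀ t ∈ Set.Icc ε E,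
      ‖(t : ℂ) ^ (s - 1) • v t‖ ≤ M * Real.exp (a * |s.re| + a) := by
    intro t ht
    have ht0 : 0 < t := hsubIoi ht
    rw [norm_smul]
    have h2 : ‖(t : ℂ) ^ (s - 1)‖ = t ^ (s.re - 1) := by
      rw [Complex.norm_cpow_eq_rpow_re_of_pos ht0]
      simp
    have hlog : |Real.log t| ≤ a := by
      rw [abs_le]
      constructor
      · have := Real.log_le_log (Real.exp_pos _) ht.1
        rwa [Real.log_exp] at this
      · have := Real.log_le_log ht0 ht.2
        rwa [Real.log_exp] at this
    have h3 : t ^ (s.re - 1) ≤ Real.exp (a * |s.re| + a) := by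
      rw [Real.rpow_def_of_pos ht0]
      apply Real.exp_le_exp.mpr
      calc Real.log t * (s.re - 1) ≤ |Real.log t * (s.re - 1)| := le_abs_self _
        _ = |Real.log t| * |s.re - 1| := abs_mul _ _
        _ ≤ a * (|s.re| + 1) := by
            apply mul_le_mul hlog _ (abs_nonneg _) (le_of_lt ha)
            calc |s.re - 1| ≤ |s.re| + |(1:ℝ)| := abs_sub _ _
              _ = |s.re| + 1 := by norm_num
        _ = a * |s.re| + a := by ring
    calc ‖(t : ℂ) ^ (s - 1)‖ * ‖v t‖ ≤ Real.exp (a * |s.re| + a) * M := by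
          apply mul_le_mul _ (hM t) (norm_nonneg _) (le_of_lt (Real.exp_pos _))
          rw [h2]; exact h3
      _ = M * Real.exp (a * |s.re| + a) := mul_comm _ _
  have hvol : volume (Set.Icc ε E) < ⊤ := by
    rw [Real.volume_Icc]; exact ENNReal.ofReal_lt_top
  have := norm_setIntegral_le_of_norm_le_const hvol key
  · calc ‖∫ t in Set.Icc ε E, (t : ℂ) ^ (s - 1) • v t‖
        ≤ M * Real.exp (a * |s.re| + a) * (volume (Set.Icc ε E)).toReal := this
      _ ≤ M * Real.exp (a * |s.re| + a) * E := by
          apply mul_le_mul_of_nonneg_left _ (by positivity)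
          rw [Real.volume_Icc, ENNReal.toReal_ofReal (by linarith)]
          have : 0 < ε := Real.exp_pos _
          linarith
      _ = M * Real.exp (2 * a) * Real.exp (a * |s.re|) := by
          have hx : Real.exp (a * |s.re| + a) * Real.exp a
              = Real.exp (2 * a) * Real.exp (a * |s.re|) := by
            rw [← Real.exp_add, ← Real.exp_add]; ring_nf
          rw [hE]; linear_combination M * hx

/-- derivative of t ↦ t^s on (0,∞) -/
lemma hasDerivAt_cpow_aux (s : ℂ) {t : ℝ} (ht : 0 < t) :
    HasDerivAt (fun x : ℝ => (x : ℂ) ^ s) (s * (t : ℂ) ^ (s - 1)) t := by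
  have h1 : HasDerivAt (fun x : ℝ => ((Real.log x : ℝ) : ℂ)) ((t⁻¹ : ℝ) : ℂ) t :=
    (Real.hasDerivAt_log ht.ne').ofReal_comp
  have h2 : HasDerivAt (fun x : ℝ => s * ((Real.log x : ℝ) : ℂ)) (s * ((t⁻¹ : ℝ) : ℂ)) t :=
    h1.const_mul s
  have h3 := h2.cexp
  have heq : (fun x : ℝ => Complex.exp (s * ((Real.log x : ℝ) : ℂ)))
      =ᶠ[nhds t] fun x : ℝ => (x : ℂ) ^ s := by
    filter_upwards [eventually_gt_nhds ht] with x hx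
    rw [Complex.cpow_def_of_ne_zero (Complex.ofReal_ne_zero.mpr hx.ne'),
      Complex.ofReal_log hx.le, mul_comm]
  have h4 := h3.congr_of_eventuallyEq heq.symm
  refine h4.congr_deriv ?_
  have ht' : (t : ℂ) ≠ 0 := Complex.ofReal_ne_zero.mpr ht.ne'
  rw [Complex.cpow_sub _ _ ht', Complex.cpow_one,
    Complex.cpow_def_of_ne_zero ht', Complex.ofReal_log ht.le]
  push_cast
  field_simp

/-- integration by parts -/
lemma mellin_ibp (a : ℝ) (ha : 0 < a) (u : ℝ → ℂ) (hu : ContDiff ℝ ((⊤:ℕ∞) : WithTop ℕ∞) u)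
    (hsupp : Function.support u ⊆ Set.Icc (Real.exp (-a)) (Real.exp a)) (s : ℂ) :
    mellin (fun t : ℝ => (t : ℂ) * deriv u t) s = -s * mellin u s := by
  set ε := Real.exp (-a) with hε
  set E := Real.exp a with hE
  have hε0 : 0 < ε := Real.exp_pos _
  have hεE : ε ≤ E := Real.exp_le_exp.mpr (by linarith)
  have hu' : ContDiff ℝ ((⊤:ℕ∞) : WithTop ℕ∞) (deriv u) := (contDiff_infty_iff_deriv.mp hu).2
  have hderiv_supp : Function.support (deriv u) ⊆ Set.Icc ε E :=
    (support_deriv_subset).trans (closure_minimal hsupp isClosed_Icc)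
  have hv : Continuous (fun t : ℝ => (t : ℂ) * deriv u t) :=
    Complex.continuous_ofReal.mul hu'.continuous
  have hvsupp : Function.support (fun t : ℝ => (t : ℂ) * deriv u t) ⊆ Set.Icc ε E := by
    intro t ht
    apply hderiv_supp
    intro h0
    exact ht (by simp [h0])
  -- the combined integrand
  set g : ℝ → ℂ := fun t => (t : ℂ) ^ (s - 1) * ((t : ℂ) * deriv u t)
      + s * ((t : ℂ) ^ (s - 1) * u t) with hg
  have hsubIoi : Set.Icc ε E ⊆ Set.Ioi (0:ℝ) := fun t ht => lt_of_lt_of_le hε0 ht.1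
  have hg_supp : Function.support g ⊆ Set.Icc ε E := by
    intro t ht
    by_contra htn
    apply ht
    have h1 : u t = 0 := Function.notMem_support.mp (fun h => htn (hsupp h))
    have h2 : deriv u t = 0 := Function.notMem_support.mp (fun h => htn (hderiv_supp h))
    simp [hg, h1, h2]
  have hint1 := integrable_aux a _ hv hvsupp s
  have hint2 := integrable_aux a u hu.continuous hsupp s
  have hg_int : Integrable g := by
    apply hint1.add
    simpa [mul_assoc] using hint2.const_mul s
  -- step 1: LHS + s * mellin = ∫ g over Ioi 0
  have step1 : mellin (fun t : ℝ => (t : ℂ) * deriv u t) s + s * mellin u s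
      = ∫ t in Set.Ioi (0:ℝ), g t := by
    rw [mellin, mellin]
    simp only [smul_eq_mul, hg]
    rw [← MeasureTheory.integral_const_mul, ← MeasureTheory.integral_add
      (hint1.integrableOn) ((hint2.const_mul s).integrableOn)]
  -- step 2: ∫ over Ioi 0 = interval integral
  set c : ℝ := ε / 2 with hc
  set d : ℝ := E + 1 with hd
  have hcd : c ≤ d := by
    have : c < ε := by rw [hc]; linarith
    linarith
  have hIccsub : Set.Icc ε E ⊆ Set.Ioc c d := by
    intro t ht
    exact ⟨lt_of_lt_of_le (by rw [hc]; linarith) ht.1, le_trans ht.2 (by rw [hd]; linarith)⟩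
  have step2 : (∫ t in Set.Ioi (0:ℝ), g t) = ∫ t in c..d, g t := by
    rw [setIntegral_eq_integral_of_forall_compl_eq_zero
      (fun x hx => Function.notMem_support.mp (fun hs' => hx (hsubIoi (hg_supp hs')))),
      intervalIntegral.integral_of_le hcd,
      setIntegral_eq_integral_of_forall_compl_eq_zero
      (fun x hx => Function.notMem_support.mp (fun hs' => hx (hIccsub (hg_supp hs'))))]
  -- step 3: FTC
  set F : ℝ → ℂ := fun t => (t : ℂ) ^ s * u t with hF
  have hderF : ∀ t ∈ Set.uIcc c d, HasDerivAt F (g t) t := by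
    intro t ht
    rw [Set.uIcc_of_le hcd] at ht
    have ht0 : 0 < t := lt_of_lt_of_le (by rw [hc]; linarith) ht.1
    have h1 := (hasDerivAt_cpow_aux s ht0).mul
      ((hu.differentiable (by simp) t).hasDerivAt)
    refine h1.congr_deriv ?_
    have ht' : (t : ℂ) ≠ 0 := Complex.ofReal_ne_zero.mpr ht0.ne'
    have hts : (t : ℂ) ^ (s - 1) * t = (t : ℂ) ^ s := by
      rw [Complex.cpow_sub _ _ ht', Complex.cpow_one]
      field_simp
    simp only [hg]
    rw [show (t : ℂ) ^ (s - 1) * ((t : ℂ) * deriv u t)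
        = ((t : ℂ) ^ (s - 1) * t) * deriv u t by ring, hts]
    ring
  have step3 : (∫ t in c..d, g t) = F d - F c :=
    intervalIntegral.integral_eq_sub_of_hasDerivAt hderF hg_int.intervalIntegrable
  have hFd : F d = 0 := by
    have hud : u d = 0 := by
      apply Function.notMem_support.mp
      intro h
      have := (hsupp h).2
      rw [hd] at this; linarith
    simp [hF, hud]
  have hFc : F c = 0 := by
    have huc : u c = 0 := by
      apply Function.notMem_support.mp
      intro h
      have := (hsupp h).1
      have : ε ≤ c := this
      rw [hc] at this; linarith
    simp [hF, huc]
  have : mellin (fun t : ℝ => (t : ℂ) * deriv u t) s + s * mellin u s = 0 := by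
    rw [step1, step2, step3, hFd, hFc, sub_zero]
  linear_combination this

/-- key induction -/
lemma key_bound (a : ℝ) (ha : 0 < a) (m : ℕ) :
    ∀ u : ℝ → ℂ, ContDiff ℝ ((⊤:ℕ∞) : WithTop ℕ∞) u →
      Function.support u ⊆ Set.Icc (Real.exp (-a)) (Real.exp a) →
      ∃ C : ℝ, 0 < C ∧ ∀ s : ℂ,
        (‖s‖) ^ m * ‖mellin u s‖ ≤ C * Real.exp (a * |s.re|) := by
  induction m with
  | zero =>
    intro u hu hsupp
    obtain ⟨M, hM⟩ := isCompact_Icc.exists_bound_of_continuousOn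
      (s := Set.Icc (Real.exp (-a)) (Real.exp a)) hu.continuous.continuousOn
    have hM' : ∀ t, ‖u t‖ ≤ max M 0 := by
      intro t
      by_cases ht : t ∈ Set.Icc (Real.exp (-a)) (Real.exp a)
      · exact le_trans (hM t ht) (le_max_left _ _)
      · have : u t = 0 := Function.notMem_support.mp (fun h => ht (hsupp h))
        simp [this]
    refine ⟨max M 0 * Real.exp (2 * a) + 1, by positivity, fun s => ?_⟩
    simp only [pow_zero, one_mul]
    calc ‖mellin u s‖ ≤ max M 0 * Real.exp (2 * a) * Real.exp (a * |s.re|) :=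
          mellin_bound_aux a ha u hu.continuous hsupp _ hM' s
      _ ≤ (max M 0 * Real.exp (2 * a) + 1) * Real.exp (a * |s.re|) := by
          apply mul_le_mul_of_nonneg_right (by linarith) (le_of_lt (Real.exp_pos _))
  | succ m ih =>
    intro u hu hsupp
    set v : ℝ → ℂ := fun t => (t : ℂ) * deriv u t with hv
    have hu' : ContDiff ℝ ((⊤:ℕ∞) : WithTop ℕ∞) (deriv u) := (contDiff_infty_iff_deriv.mp hu).2
    have hvC : ContDiff ℝ ((⊤:ℕ∞) : WithTop ℕ∞) v := Complex.ofRealCLM.contDiff.mul hu'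
    have hvsupp : Function.support v ⊆ Set.Icc (Real.exp (-a)) (Real.exp a) := by
      intro t ht
      apply (support_deriv_subset.trans (closure_minimal hsupp isClosed_Icc))
      intro h0
      exact ht (by simp [hv, h0])
    obtain ⟨C, hC, hCb⟩ := ih v hvC hvsupp
    refine ⟨C, hC, fun s => ?_⟩
    have hibp := mellin_ibp a ha u hu hsupp s
    have : ‖mellin v s‖ = ‖s‖ * ‖mellin u s‖ := by
      rw [hibp, norm_mul, norm_neg]
    calc (‖s‖) ^ (m + 1) * ‖mellin u s‖
        = (‖s‖) ^ m * (‖s‖ * ‖mellin u s‖) := by ring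
      _ = (‖s‖) ^ m * ‖mellin v s‖ := by rw [this]
      _ ≤ C * Real.exp (a * |s.re|) := hCb s

end MellinPW

open MellinPW in
/-- Paley-Wiener for the Mellin transform of smooth functions supported in
`[e^{-a}, e^a] ⊂ (0,∞)`: the Mellin transform is entire and rapidly decreasing
with exponential growth `e^{a|Re s|}`. -/
theorem mellin_paleyWiener_smooth_compact_support
    (a : ℝ) (ha : 0 < a) (u : ℝ → ℂ) (hu : ContDiff ℝ (⊤ : ℕ∞) u)
    (hsupp : Function.support u ⊆ Set.Icc (Real.exp (-a)) (Real.exp a)) :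
    (∀ s : ℂ, DifferentiableAt ℂ (fun z : ℂ => mellin u z) s) ∧
    ∀ m : ℕ, ∃ C : ℝ, 0 < C ∧ ∀ s : ℂ,
      ‖mellin u s‖
        ≤ C * (1 + ‖s‖) ^ (-(m : ℝ)) * Real.exp (a * |s.re|) := by
  have hu : ContDiff ℝ ((⊤:ℕ∞) : WithTop ℕ∞) u := hu.of_le (by simp)
  constructor
  · intro s
    have htop : u =O[atTop] (fun x : ℝ => x ^ (-(s.re + 1))) := by
      rw [Asymptotics.isBigO_iff]
      refine ⟨1, ?_⟩
      filter_upwards [eventually_gt_atTop (Real.exp a)] with x hx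
      have : u x = 0 := Function.notMem_support.mp (fun h => absurd (hsupp h).2 (not_le.mpr hx))
      simp [this]
    have hbot : u =O[nhdsWithin 0 (Set.Ioi 0)] (fun x : ℝ => x ^ (-(s.re - 1))) := by
      rw [Asymptotics.isBigO_iff]
      refine ⟨1, ?_⟩
      filter_upwards [Ioo_mem_nhdsGT_of_mem
        (Set.mem_Ico.mpr ⟨le_refl (0:ℝ), Real.exp_pos (-a)⟩)] with x hx
      have : u x = 0 := Function.notMem_support.mp
        (fun h => absurd (hsupp h).1 (not_le.mpr hx.2))
      simp [this]
    exact mellin_differentiableAt_of_isBigO_rpow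
      (hu.continuous.locallyIntegrable.locallyIntegrableOn _)
      htop (by linarith) hbot (by linarith)
  · intro m
    obtain ⟨C0, hC0, hC0b⟩ := key_bound a ha 0 u hu hsupp
    obtain ⟨Cm, hCm, hCmb⟩ := key_bound a ha m u hu hsupp
    refine ⟨2 ^ m * (C0 + Cm), by positivity, fun s => ?_⟩
    set A := ‖s‖ with hA
    have hA0 : 0 ≤ A := norm_nonneg _
    have hP : (0:ℝ) < (1 + A) ^ m := by positivity
    rw [Real.rpow_neg (by linarith), Real.rpow_natCast]
    rw [show (2:ℝ) ^ m * (C0 + Cm) * ((1 + A) ^ m)⁻¹ * Real.exp (a * |s.re|)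
        = (2 ^ m * (C0 + Cm) * Real.exp (a * |s.re|)) / (1 + A) ^ m by ring]
    rw [le_div_iff₀ hP]
    have h1 : (1 + A) ^ m ≤ 2 ^ m * (1 + A ^ m) := by
      calc (1 + A) ^ m ≤ (2 * max 1 A) ^ m := by
            apply pow_le_pow_left₀ (by linarith)
            rcases le_total A 1 with h | h
            · rw [max_eq_left h]; linarith
            · rw [max_eq_right h]; linarith
        _ = 2 ^ m * (max 1 A) ^ m := mul_pow _ _ _
        _ ≤ 2 ^ m * (1 + A ^ m) := by
            apply mul_le_mul_of_nonneg_left _ (by positivity)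
            rcases le_total A 1 with h | h
            · rw [max_eq_left h]; simp; positivity
            · rw [max_eq_right h]; simp
    calc ‖mellin u s‖ * (1 + A) ^ m
        = (1 + A) ^ m * ‖mellin u s‖ := mul_comm _ _
      _ ≤ 2 ^ m * (1 + A ^ m) * ‖mellin u s‖ :=
          mul_le_mul_of_nonneg_right h1 (norm_nonneg _)
      _ = 2 ^ m * (‖mellin u s‖ + A ^ m * ‖mellin u s‖) := by ring
      _ ≤ 2 ^ m * (C0 * Real.exp (a * |s.re|) + Cm * Real.exp (a * |s.re|)) := by
          apply mul_le_mul_of_nonneg_left _ (by positivity)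
          have h0 := hC0b s
          simp only [pow_zero, one_mul] at h0
          exact add_le_add h0 (hCmb s)
      _ = 2 ^ m * (C0 + Cm) * Real.exp (a * |s.re|) := by ring
end

section
/- Let ũ ∈ 𝓢(ℝ,ℂ) and let u be its restriction to (0,∞). Then: (i) for every s with Re s > 0 the integral defining mellin u s converges absolutely, and s ↦ mellin u s is complex-differentiable on {Re s > 0}; (ii) there exists F : ℂ → ℂ, complex-differentiable on ℂ \ {−j : j ∈ ℕ}, with F(s) = mellin u s whenever Re s > 0, such that for every j ∈ ℕ the function s ↦ F(s) − (ũ^{(j)}(0)/j!)·(s + j)^{-1} extends to a complex-differentiable function on a neighborhood of −j (i.e. F has at most a simple pole at −j with residue ũ^{(j)}(0)/j!); (iii) for every c > 0 and every m ∈ ℕ, sup_{η ∈ ℝ} (1+|η|)^m · |mellin u (c + i·η)| < ∞. -/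
/-!
Integrating by parts against `t ^ s` gives `𝓜(v')(s + 1) = -s • 𝓜 v (s)` for `0 < Re s`, hence
`𝓜 v (s) = (∏_{k<N} -(s + k))⁻¹ • 𝓜(v⁽ᴺ⁾)(s + N)`. The right-hand side is holomorphic on
`Re s > -N` away from `0, -1, …, 1 - N`, which continues `𝓜 v` to `ℂ` minus the non-positive
integers. Near `-j` the only vanishing factor is `-(s + j)`, and the residue comes from
`𝓜(v⁽ʲ⁺¹⁾)(1) = -v⁽ʲ⁾(0)`. On a vertical line the same identity trades the weight `∏_{k<m} ‖s + k‖`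
for the absolutely convergent `𝓜(v⁽ᵐ⁾)(s + m)`.
-/

open MeasureTheory Complex Set Filter Asymptotics
open scoped Topology Nat

theorem prod_range_natCast_sub_eq_factorial {R : Type*} [CommRing R] (j : ℕ) :
    ∏ k ∈ Finset.range j, ((j : R) - k) = j ! := by
  induction j with
  | zero => simp
  | succ j ih =>
    rw [Finset.prod_range_succ', Nat.factorial_succ]
    push_cast
    simp_rw [add_sub_add_right_eq_sub, ih]
    ring

theorem abs_re_add_natCast_lt_one {z : ℂ} {j : ℕ} (hz : z ∈ Metric.ball (-(j : ℂ)) 1) :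
    |z.re + j| < 1 := by
  simpa using (abs_re_le_norm (z + j)).trans_lt (by simpa [dist_eq] using hz)

theorem add_natCast_ne_zero_of_mem_ball {z : ℂ} {j k : ℕ} (hz : z ∈ Metric.ball (-(j : ℂ)) 1)
    (hk : k < j) : z + k ≠ 0 := by
  intro hzk
  have hre := abs_re_add_natCast_lt_one hz
  rw [eq_neg_of_add_eq_zero_left hzk, neg_re, natCast_re] at hre
  have hkj : (k : ℝ) + 1 ≤ j := by exact_mod_cast hk
  linarith [(abs_lt.1 hre).2]

variable {E : Type*} [NormedAddCommGroup E] [NormedSpace ℂ E]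

theorem norm_mellin_le_integral (f : ℝ → E) (s : ℂ) :
    ‖mellin f s‖ ≤ ∫ t in Ioi 0, t ^ (s.re - 1) * ‖f t‖ := by
  refine (norm_integral_le_integral_norm _).trans_eq (setIntegral_congr_fun measurableSet_Ioi ?_)
  intro t ht
  simp only [norm_smul, norm_cpow_eq_rpow_re_of_pos ht, sub_re, one_re]

theorem one_add_abs_im_le_mul_norm_add {s : ℂ} (hs : 0 < s.re) {x : ℝ} (hx : 0 ≤ x) :
    1 + |s.im| ≤ (1 + s.re⁻¹) * ‖s + x‖ := by
  have hre : s.re ≤ ‖s + x‖ := by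
    have h := abs_re_le_norm (s + x)
    rw [add_re, ofReal_re, abs_of_nonneg (by linarith)] at h
    linarith
  have him : |s.im| ≤ ‖s + x‖ := by simpa using abs_im_le_norm (s + x)
  have hone : 1 ≤ s.re⁻¹ * ‖s + x‖ := by rwa [inv_mul_eq_div, one_le_div hs]
  linarith

namespace SchwartzMap

theorem isBigO_atTop_rpow (v : 𝓢(ℝ, E)) (a : ℝ) : (v : ℝ → E) =O[atTop] (· ^ a) :=
  ((v.isBigO_cocompact_rpow a).mono atTop_le_cocompact).congr' EventuallyEq.rfl <|
    (eventually_ge_atTop 0).mono fun _ ht => congrArg (· ^ a) (Real.norm_of_nonneg ht)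

theorem isBigO_nhdsGT_zero (v : 𝓢(ℝ, E)) : (v : ℝ → E) =O[𝓝[>] 0] (· ^ (-(0 : ℝ))) := by
  simpa using (v.continuous.tendsto 0).isBigO_one ℝ |>.mono nhdsWithin_le_nhds

theorem mellinConvergent (v : 𝓢(ℝ, E)) {s : ℂ} (hs : 0 < s.re) : MellinConvergent v s :=
  mellinConvergent_of_isBigO_rpow (v.continuous.locallyIntegrable.locallyIntegrableOn _)
    (v.isBigO_atTop_rpow (-(s.re + 1))) (lt_add_one s.re) v.isBigO_nhdsGT_zero hs

theorem differentiableAt_mellin (v : 𝓢(ℝ, E)) {s : ℂ} (hs : 0 < s.re) :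
    DifferentiableAt ℂ (mellin v) s :=
  mellin_differentiableAt_of_isBigO_rpow (v.continuous.locallyIntegrable.locallyIntegrableOn _)
    (v.isBigO_atTop_rpow (-(s.re + 1))) (lt_add_one s.re) v.isBigO_nhdsGT_zero hs

theorem tendsto_cpow_smul_atTop (v : 𝓢(ℝ, E)) (s : ℂ) :
    Tendsto (fun t : ℝ => (t : ℂ) ^ s • v t) atTop (𝓝 0) := by
  have hpow : (fun t : ℝ => (t : ℂ) ^ s) =O[atTop] (· ^ s.re) :=
    IsBigO.of_bound 1 <| (eventually_gt_atTop 0).mono fun t ht => by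
      rw [one_mul, norm_cpow_eq_rpow_re_of_pos ht, Real.norm_of_nonneg (by positivity)]
  refine ((hpow.smul (v.isBigO_atTop_rpow (-(s.re + 1)))).trans_tendsto ?_)
  refine (tendsto_rpow_neg_atTop one_pos).congr' ?_
  filter_upwards [eventually_gt_atTop 0] with t ht
  rw [smul_eq_mul, ← Real.rpow_add ht]
  ring_nf

theorem continuousWithinAt_cpow_smul_zero (v : 𝓢(ℝ, E)) {s : ℂ} (hs : 0 < s.re) :
    ContinuousWithinAt (fun t : ℝ => (t : ℂ) ^ s • v t) (Ici 0) 0 :=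
  ((continuousAt_ofReal_cpow_const 0 s (Or.inl hs)).smul
    v.continuous.continuousAt).continuousWithinAt

theorem iterate_derivCLM_apply (v : 𝓢(ℝ, E)) (n : ℕ) (x : ℝ) :
    (derivCLM ℝ E)^[n] v x = iteratedDeriv n v x := by
  induction n generalizing v with
  | zero => simp
  | succ n ih => rw [Function.iterate_succ_apply, ih, iteratedDeriv_succ']; rfl

theorem differentiableAt_inv_prod_smul_mellin (v : 𝓢(ℝ, E)) (m N : ℕ) {s : ℂ}
    (hs : 0 < s.re + N) (hm : ∀ k < m, s + k ≠ 0) :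
    DifferentiableAt ℂ (fun z : ℂ => (∏ k ∈ Finset.range m, -(z + k))⁻¹ • mellin v (z + N)) s := by
  have hprod : ∏ k ∈ Finset.range m, -(s + k) ≠ 0 :=
    Finset.prod_ne_zero_iff.2 fun k hk => neg_ne_zero.2 (hm k (Finset.mem_range.1 hk))
  have hmellin : DifferentiableAt ℂ (fun z => mellin v (z + N)) s :=
    (v.differentiableAt_mellin (by simpa using hs)).comp s (differentiableAt_id.add_const _)
  have hpoly : DifferentiableAt ℂ (fun z : ℂ => ∏ k ∈ Finset.range m, -(z + k)) s :=
    DifferentiableAt.fun_finsetProd fun k _ => (differentiableAt_id.add_const (k : ℂ)).neg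
  exact (hpoly.inv hprod).smul hmellin

variable [CompleteSpace E]

theorem mellin_derivCLM (v : 𝓢(ℝ, E)) {s : ℂ} (hs : 0 < s.re) :
    mellin (derivCLM ℝ E v) (s + 1) = -s • mellin v s := by
  have hderiv : ∀ t ∈ Ioi (0 : ℝ), HasDerivAt (fun t : ℝ => (t : ℂ) ^ s • v t)
      (s • ((t : ℂ) ^ (s - 1) • v t) + (t : ℂ) ^ (s + 1 - 1) • derivCLM ℝ E v t) t := by
    intro t ht
    have hcpow : HasDerivAt (fun t : ℝ => (t : ℂ) ^ s) (s * (t : ℂ) ^ (s - 1)) t := by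
      simpa using
        ((hasDerivAt_id (t : ℂ)).cpow_const (c := s) (ofReal_mem_slitPlane.2 ht)).comp_ofReal
    exact (hcpow.smul (v.hasDerivAt t)).congr_deriv (by simp [mul_smul, add_comm])
  have hint₁ : IntegrableOn (fun t : ℝ => s • ((t : ℂ) ^ (s - 1) • v t)) (Ioi 0) :=
    (v.mellinConvergent hs).smul s
  have hint₂ := (derivCLM ℝ E v).mellinConvergent (s := s + 1) (by rw [add_re, one_re]; linarith)
  have hIBP := integral_Ioi_of_hasDerivAt_of_tendsto (v.continuousWithinAt_cpow_smul_zero hs)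
    hderiv (hint₁.add hint₂) (v.tendsto_cpow_smul_atTop s)
  rw [integral_add hint₁ hint₂, integral_smul] at hIBP
  have hs0 : s ≠ 0 := fun h => by simp [h] at hs
  simp only [ofReal_zero, zero_cpow hs0, zero_smul, sub_zero] at hIBP
  rw [neg_smul, eq_neg_iff_add_eq_zero, add_comm]
  exact hIBP

theorem mellin_derivCLM_one (v : 𝓢(ℝ, E)) : mellin (derivCLM ℝ E v) 1 = -v 0 := by
  have hIBP := integral_Ioi_of_hasDerivAt_of_tendsto (a := 0) v.continuous.continuousWithinAt
    (fun t _ => v.hasDerivAt t) (derivCLM ℝ E v).integrable.integrableOn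
    (v.tendsto_cocompact.mono_left atTop_le_cocompact)
  simp only [mellin, sub_self, cpow_zero, one_smul, derivCLM_apply]
  rw [hIBP, zero_sub]

theorem mellin_iterate_derivCLM (v : 𝓢(ℝ, E)) (n : ℕ) {s : ℂ} (hs : 0 < s.re) :
    mellin ((derivCLM ℝ E)^[n] v) (s + n) = (∏ k ∈ Finset.range n, -(s + k)) • mellin v s := by
  induction n with
  | zero => simp
  | succ n ih =>
    have hsn : 0 < (s + n).re := by rw [add_re, natCast_re]; positivity
    rw [Function.iterate_succ_apply', Nat.cast_succ, ← add_assoc, mellin_derivCLM _ hsn, ih,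
      Finset.prod_range_succ, mul_comm, mul_smul]

noncomputable def mellinContinuation (v : 𝓢(ℝ, E)) (N : ℕ) (s : ℂ) : E :=
  (∏ k ∈ Finset.range N, -(s + k))⁻¹ • mellin ((derivCLM ℝ E)^[N] v) (s + N)

theorem mellinContinuation_succ (v : 𝓢(ℝ, E)) {N : ℕ} {s : ℂ} (hs : -(N : ℝ) < s.re) :
    v.mellinContinuation (N + 1) s = v.mellinContinuation N s := by
  have hsN : 0 < (s + N).re := by rw [add_re, natCast_re]; linarith
  have hne : -(s + N) ≠ 0 := neg_ne_zero.2 fun h => by simp [h] at hsN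
  rw [mellinContinuation, mellinContinuation, Function.iterate_succ_apply', Nat.cast_succ,
    ← add_assoc, mellin_derivCLM _ hsN, Finset.prod_range_succ, smul_smul, mul_inv,
    mul_assoc, inv_mul_cancel₀ hne, mul_one]

theorem mellinContinuation_eq_of_le (v : 𝓢(ℝ, E)) {N M : ℕ} (hNM : N ≤ M) {s : ℂ}
    (hs : -(N : ℝ) < s.re) : v.mellinContinuation M s = v.mellinContinuation N s := by
  induction M, hNM using Nat.le_induction with
  | base => rfl
  | succ M hNM ih =>
    rw [mellinContinuation_succ _ (lt_of_le_of_lt (by simpa using hNM) hs), ih]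

noncomputable def mellinExtension (v : 𝓢(ℝ, E)) (s : ℂ) : E :=
  v.mellinContinuation (⌈-s.re⌉₊ + 1) s

theorem mellinExtension_eq (v : 𝓢(ℝ, E)) {N : ℕ} {s : ℂ} (hs : -(N : ℝ) < s.re) :
    v.mellinExtension s = v.mellinContinuation N s := by
  have hceil : -((⌈-s.re⌉₊ + 1 : ℕ) : ℝ) < s.re := by
    push_cast; linarith [Nat.le_ceil (-s.re)]
  rw [mellinExtension, ← v.mellinContinuation_eq_of_le (le_max_left _ N) hceil,
    v.mellinContinuation_eq_of_le (le_max_right _ N) hs]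

theorem mellinExtension_eq_mellin (v : 𝓢(ℝ, E)) {s : ℂ} (hs : 0 < s.re) :
    v.mellinExtension s = mellin v s := by
  simp [v.mellinExtension_eq (N := 0) (by simpa using hs), mellinContinuation]

theorem differentiableAt_mellinExtension (v : 𝓢(ℝ, E)) {s : ℂ} (hs : ∀ j : ℕ, s ≠ -j) :
    DifferentiableAt ℂ v.mellinExtension s := by
  set N := ⌈-s.re⌉₊ + 1
  have hN : -(N : ℝ) < s.re := by simp only [N]; push_cast; linarith [Nat.le_ceil (-s.re)]
  have hopen : IsOpen {z : ℂ | -(N : ℝ) < z.re} := isOpen_lt continuous_const continuous_re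
  have heq : v.mellinExtension =ᶠ[𝓝 s] v.mellinContinuation N :=
    eventually_of_mem (hopen.mem_nhds hN) fun z hz => v.mellinExtension_eq hz
  refine heq.differentiableAt_iff.2 ?_
  exact ((derivCLM ℝ E)^[N] v).differentiableAt_inv_prod_smul_mellin N N (by linarith)
    fun k _ h => hs k (eq_neg_of_add_eq_zero_left h)

theorem exists_differentiableAt_mellinExtension_sub_pole (v : 𝓢(ℝ, E)) (j : ℕ) :
    ∃ ε > 0, ∃ G : ℂ → E, (∀ z ∈ Metric.ball (-(j : ℂ)) ε, DifferentiableAt ℂ G z) ∧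
      ∀ z ∈ Metric.ball (-(j : ℂ)) ε, z ≠ -(j : ℂ) →
        G z = v.mellinExtension z - (z + j)⁻¹ • ((j ! : ℂ)⁻¹ • iteratedDeriv j v 0) := by
  set w := (derivCLM ℝ E)^[j + 1] v
  -- `h z = (z + j) • mellinExtension v z` near `-j`; the regular part is its slope at `-j`.
  set h : ℂ → E := fun z => -((∏ k ∈ Finset.range j, -(z + k))⁻¹ • mellin w (z + (j + 1 : ℕ)))
  have hre : ∀ z ∈ Metric.ball (-(j : ℂ)) 1, -((j + 1 : ℕ) : ℝ) < z.re := fun z hz => by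
    push_cast; linarith [(abs_lt.1 (abs_re_add_natCast_lt_one hz)).1]
  have hdiff : DifferentiableOn ℂ h (Metric.ball (-(j : ℂ)) 1) := fun z hz =>
    (w.differentiableAt_inv_prod_smul_mellin j (j + 1) (by linarith [hre z hz])
      fun _ hk => add_natCast_ne_zero_of_mem_ball hz hk).neg.differentiableWithinAt
  have hpole : ∀ z ∈ Metric.ball (-(j : ℂ)) 1, v.mellinExtension z = (z + j)⁻¹ • h z := by
    intro z hz
    rw [v.mellinExtension_eq (hre z hz), mellinContinuation, Finset.prod_range_succ, mul_inv, inv_neg]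
    module
  have hcenter : h (-j) = (j ! : ℂ)⁻¹ • iteratedDeriv j v 0 := by
    have harg : -(j : ℂ) + (j + 1 : ℕ) = 1 := by push_cast; ring
    have hprod : ∏ k ∈ Finset.range j, -(-(j : ℂ) + k) = j ! := by
      simp_rw [neg_add_eq_sub, neg_sub, prod_range_natCast_sub_eq_factorial]
    simp only [h, w, harg, hprod, Function.iterate_succ_apply', mellin_derivCLM_one,
      iterate_derivCLM_apply, smul_neg, neg_neg]
  refine ⟨1, one_pos, dslope h (-j), fun z hz => ?_, fun z hz hzj => ?_⟩
  · exact ((differentiableOn_dslope (Metric.isOpen_ball.mem_nhds (Metric.mem_ball_self one_pos))).2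
      hdiff).differentiableAt (Metric.isOpen_ball.mem_nhds hz)
  · rw [dslope_of_ne _ hzj, slope_def_module, hpole z hz, ← hcenter, sub_neg_eq_add, smul_sub]

theorem exists_bound_mellin_vertical (v : 𝓢(ℝ, E)) {c : ℝ} (hc : 0 < c) (m : ℕ) :
    ∃ B : ℝ, ∀ η : ℝ, (1 + |η|) ^ m * ‖mellin v (c + I * η)‖ ≤ B := by
  refine ⟨(1 + c⁻¹) ^ m * ∫ t in Ioi 0, t ^ (c + m - 1) * ‖(derivCLM ℝ E)^[m] v t‖, fun η => ?_⟩
  set s : ℂ := c + I * η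
  have hre : s.re = c := by simp [s]
  have him : s.im = η := by simp [s]
  have hpow : (1 + |η|) ^ m ≤ (1 + c⁻¹) ^ m * ∏ k ∈ Finset.range m, ‖s + k‖ := calc
    (1 + |η|) ^ m = ∏ _k ∈ Finset.range m, (1 + |s.im|) := by simp [him]
    _ ≤ ∏ k ∈ Finset.range m, (1 + s.re⁻¹) * ‖s + (k : ℝ)‖ :=
        Finset.prod_le_prod (fun _ _ => by positivity)
          fun k _ => one_add_abs_im_le_mul_norm_add (hre ▸ hc) k.cast_nonneg
    _ = (1 + c⁻¹) ^ m * ∏ k ∈ Finset.range m, ‖s + k‖ := by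
        simp [Finset.prod_mul_distrib, hre]
  calc (1 + |η|) ^ m * ‖mellin v s‖
      ≤ (1 + c⁻¹) ^ m * ((∏ k ∈ Finset.range m, ‖s + k‖) * ‖mellin v s‖) := by
        rw [← mul_assoc]; gcongr
    _ = (1 + c⁻¹) ^ m * ‖mellin ((derivCLM ℝ E)^[m] v) (s + m)‖ := by
        rw [v.mellin_iterate_derivCLM m (hre ▸ hc), norm_smul, norm_prod]
        simp only [norm_neg]
    _ ≤ _ := by
        gcongr
        simpa [hre] using norm_mellin_le_integral _ (s + m)

end SchwartzMap

/-- Paley-Wiener for the Mellin transform of Schwartz functions restricted to `(0,∞)`: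
the transform converges absolutely and is analytic on `Re s > 0`, extends meromorphically
to `ℂ` with at most simple poles at `-j` of residue `ũ^{(j)}(0)/j!`, and is rapidly
decreasing on vertical lines. -/
theorem mellin_paleyWiener_schwartz (u : SchwartzMap ℝ ℂ) :
    (∀ s : ℂ, 0 < s.re →
        IntegrableOn (fun t : ℝ => (t : ℂ) ^ (s - 1) * u t) (Set.Ioi (0 : ℝ))) ∧
    (∀ s : ℂ, 0 < s.re →
        DifferentiableAt ℂ (fun z : ℂ => mellin (fun t : ℝ => u t) z) s) ∧
    (∃ F : ℂ → ℂ,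
      (∀ s : ℂ, (∀ j : ℕ, s ≠ -(j : ℂ)) → DifferentiableAt ℂ F s) ∧
      (∀ s : ℂ, 0 < s.re → F s = mellin (fun t : ℝ => u t) s) ∧
      ∀ j : ℕ, ∃ ε : ℝ, 0 < ε ∧ ∃ G : ℂ → ℂ,
        (∀ z ∈ Metric.ball (-(j : ℂ)) ε, DifferentiableAt ℂ G z) ∧
        ∀ z ∈ Metric.ball (-(j : ℂ)) ε, z ≠ -(j : ℂ) →
          G z = F z - (iteratedDeriv j (fun x : ℝ => u x) 0 / (j.factorial : ℂ)) *
            (z + (j : ℂ))⁻¹) ∧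
    ∀ c : ℝ, 0 < c → ∀ m : ℕ, ∃ B : ℝ, ∀ η : ℝ,
      (1 + |η|) ^ m * ‖mellin (fun t : ℝ => u t) (c + Complex.I * η)‖ ≤ B := by
  refine ⟨fun s hs => u.mellinConvergent hs, fun s hs => u.differentiableAt_mellin hs,
    ⟨u.mellinExtension, fun s hs => u.differentiableAt_mellinExtension hs,
      fun s hs => u.mellinExtension_eq_mellin hs, fun j => ?_⟩,
    fun c hc m => u.exists_bound_mellin_vertical hc m⟩
  obtain ⟨ε, hε, G, hG, hGpole⟩ := u.exists_differentiableAt_mellinExtension_sub_pole j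
  refine ⟨ε, hε, G, hG, fun z hz hzj => ?_⟩
  rw [hGpole z hz hzj, smul_eq_mul, smul_eq_mul]
  ring
end

section
/- Let ω be a cut-off function, d ∈ ℂ, and k ∈ ℕ. For every s with Re s > −Re d the integral M(s) := ∫_{t ∈ (0,∞)} ω(t) · t^{s+d-1} · (log t)^k dt converges absolutely, and there exists an entire function h : ℂ → ℂ such that M(s) = (−1)^k · k! / (s + d)^{k+1} + h(s) for all s with Re s > −Re d. In particular M extends to a meromorphic function on ℂ whose only pole is at s = −d, of order k+1. -/
open MeasureTheory Complex

section Aux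

open Set Filter Asymptotics Real

/-- The model function: indicator of `(0,1]` times `(log t)^k`. -/
private noncomputable def Fk (k : ℕ) : ℝ → ℂ :=
  (Set.Ioc (0:ℝ) 1).indicator (fun t => (Real.log t : ℂ) ^ k)

private lemma logpow_cont (k : ℕ) :
    ContinuousOn (fun t : ℝ => (Real.log t : ℂ) ^ k) (Set.Ioi (0:ℝ)) :=
  ((Complex.continuous_ofReal.comp_continuousOn
    (Real.continuousOn_log.mono fun x hx => ne_of_gt hx)).pow k)

private lemma logpow_isBigO_zero (k : ℕ) : ∀ b : ℝ, 0 < b →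
    (fun t : ℝ => (Real.log t : ℂ) ^ k) =O[nhdsWithin 0 (Set.Ioi 0)] (fun t => t ^ (-b)) := by
  induction k with
  | zero =>
    intro b hb
    simp only [pow_zero]
    rw [Asymptotics.isBigO_iff]
    refine ⟨1, ?_⟩
    filter_upwards [Ioc_mem_nhdsGT (zero_lt_one (α := ℝ))] with t ht
    rw [norm_one, one_mul, Real.norm_eq_abs, _root_.abs_of_nonneg (Real.rpow_nonneg ht.1.le _)]
    exact Real.one_le_rpow_of_pos_of_le_one_of_nonpos ht.1 ht.2 (neg_nonpos.2 hb.le)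
  | succ k ih =>
    intro b hb
    have h := isBigO_rpow_zero_log_smul (half_lt_self hb) (ih (b/2) (half_pos hb))
    refine h.congr' (Filter.Eventually.of_forall fun t => ?_) Filter.EventuallyEq.rfl
    simp only [Complex.real_smul, pow_succ]
    ring

private lemma Fk_locInt (k : ℕ) : LocallyIntegrableOn (Fk k) (Set.Ioi (0:ℝ)) := by
  have hg : LocallyIntegrableOn (fun t : ℝ => (Real.log t : ℂ) ^ k) (Set.Ioi (0:ℝ)) :=
    (logpow_cont k).locallyIntegrableOn measurableSet_Ioi
  intro x hx
  obtain ⟨U, hU, hUi⟩ := hg x hx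
  exact ⟨U, hU, hUi.indicator measurableSet_Ioc⟩

private lemma Fk_top (k : ℕ) (a : ℝ) :
    Fk k =O[atTop] (fun t : ℝ => t ^ (-a)) := by
  have h : Fk k =ᶠ[atTop] (fun _ => (0:ℂ)) := by
    filter_upwards [eventually_gt_atTop (1:ℝ)] with t ht
    exact Set.indicator_of_notMem (fun hm => absurd hm.2 (not_le.2 ht)) _
  exact h.trans_isBigO (Asymptotics.isBigO_zero _ _)

private lemma Fk_bot (k : ℕ) {b : ℝ} (hb : 0 < b) :
    Fk k =O[nhdsWithin 0 (Set.Ioi 0)] (fun t : ℝ => t ^ (-b)) := by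
  have h : Fk k =ᶠ[nhdsWithin 0 (Set.Ioi 0)] (fun t => (Real.log t : ℂ) ^ k) := by
    filter_upwards [Ioc_mem_nhdsGT (zero_lt_one (α := ℝ))] with t ht
    exact Set.indicator_of_mem ht _
  exact h.trans_isBigO (logpow_isBigO_zero k b hb)

private lemma Fk_conv {k : ℕ} {s : ℂ} (hs : 0 < s.re) : MellinConvergent (Fk k) s :=
  mellinConvergent_of_isBigO_rpow (Fk_locInt k) (Fk_top k (s.re + 1)) (lt_add_one _)
    (Fk_bot k (half_pos hs)) (half_lt_self hs)

private lemma mellin_Fk (k : ℕ) : ∀ s : ℂ, 0 < s.re →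
    mellin (Fk k) s = (-1) ^ k * (Nat.factorial k : ℂ) / s ^ (k + 1) := by
  induction k with
  | zero =>
    intro s hs
    have he : Fk 0 = Set.indicator (Set.Ioc (0:ℝ) 1) (fun _ => (1:ℂ)) := by
      funext t; simp [Fk]
    rw [he, (hasMellin_one_Ioc hs).2]
    simp
  | succ k ih =>
    intro s hs
    have hs0 : s ≠ 0 := by
      intro h; rw [h, Complex.zero_re] at hs; exact lt_irrefl _ hs
    obtain ⟨-, hder⟩ := mellin_hasDerivAt_of_isBigO_rpow (Fk_locInt k)
      (Fk_top k (s.re + 1)) (lt_add_one _) (Fk_bot k (half_pos hs)) (half_lt_self hs)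
    have hsm : (fun t : ℝ => Real.log t • Fk k t) = Fk (k + 1) := by
      funext t
      by_cases h : t ∈ Set.Ioc (0:ℝ) 1
      · simp only [Fk, Set.indicator_of_mem h, Complex.real_smul, pow_succ]; ring
      · simp [Fk, Set.indicator_of_notMem h]
    rw [hsm] at hder
    have hev : mellin (Fk k) =ᶠ[nhds s]
        (fun z : ℂ => (-1) ^ k * (Nat.factorial k : ℂ) / z ^ (k + 1)) := by
      filter_upwards [(isOpen_lt continuous_const Complex.continuous_re).mem_nhds hs] with z hz
      exact ih z hz
    have hder2 : HasDerivAt (fun z : ℂ => (-1) ^ k * (Nat.factorial k : ℂ) / z ^ (k + 1))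
        (mellin (Fk (k + 1)) s) s := hder.congr_of_eventuallyEq hev.symm
    have hder3 : HasDerivAt (fun z : ℂ => (-1) ^ k * (Nat.factorial k : ℂ) / z ^ (k + 1))
        ((-1) ^ (k + 1) * (Nat.factorial (k + 1) : ℂ) / s ^ (k + 2)) s := by
      have h1 := ((hasDerivAt_pow (k + 1) s).inv (pow_ne_zero _ hs0)).const_mul
        ((-1) ^ k * (Nat.factorial k : ℂ))
      refine h1.congr_deriv (Eq.symm ?_)
      simp only [Nat.factorial_succ]
      push_cast
      field_simp
      ring
    exact hder2.unique hder3

end Aux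

/-- The Mellin-type integral `∫_{(0,∞)} ω(t) t^{s+d-1} (log t)^k dt` of a cut-off function
converges for `Re s > -Re d` and equals `(-1)^k k!/(s+d)^{k+1}` plus an entire function;
in particular it extends meromorphically with a single pole of order `k+1` at `s = -d`. -/
theorem mellin_cutoff_log_pow
    (ω : ℝ → ℝ) (hω : ContDiff ℝ (⊤ : ℕ∞) ω) (hωc : HasCompactSupport ω)
    (hω1 : ∀ᶠ x in nhds (0 : ℝ), ω x = 1) (d : ℂ) (k : ℕ) :
    (∀ s : ℂ, -d.re < s.re →
      IntegrableOn (fun t : ℝ => (ω t : ℂ) * (t : ℂ) ^ (s + d - 1) * (Real.log t : ℂ) ^ k)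
        (Set.Ioi (0 : ℝ))) ∧
    ∃ h : ℂ → ℂ, Differentiable ℂ h ∧
      ∀ s : ℂ, -d.re < s.re →
        (∫ t in Set.Ioi (0 : ℝ), (ω t : ℂ) * (t : ℂ) ^ (s + d - 1) * (Real.log t : ℂ) ^ k)
          = (-1) ^ k * (k.factorial : ℂ) / (s + d) ^ (k + 1) + h s := by
  set W : ℝ → ℂ := fun t => (ω t : ℂ) * (Real.log t : ℂ) ^ k with hW
  set G : ℝ → ℂ := fun t => W t - Fk k t with hG
  -- ω vanishes eventually at +∞
  have hωtop : ∀ᶠ t : ℝ in Filter.atTop, ω t = 0 := by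
    have h0 : ω =ᶠ[Filter.coclosedCompact ℝ] 0 := hasCompactSupport_iff_eventuallyEq.mp hωc
    rw [Filter.coclosedCompact_eq_cocompact, cocompact_eq_atBot_atTop] at h0
    exact (h0.filter_mono le_sup_right : ω =ᶠ[Filter.atTop] 0)
  have hωbot : ∀ᶠ t : ℝ in nhdsWithin 0 (Set.Ioi 0), ω t = 1 :=
    hω1.filter_mono nhdsWithin_le_nhds
  -- local integrability
  have hWloc : MeasureTheory.LocallyIntegrableOn W (Set.Ioi (0:ℝ)) :=
    (((Complex.continuous_ofReal.comp hω.continuous).continuousOn).mul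
      (logpow_cont k)).locallyIntegrableOn measurableSet_Ioi
  have hGloc : MeasureTheory.LocallyIntegrableOn G (Set.Ioi (0:ℝ)) :=
    hWloc.sub (Fk_locInt k)
  -- big-O estimates for W
  have hWtop : ∀ a : ℝ, W =O[Filter.atTop] (fun t : ℝ => t ^ (-a)) := by
    intro a
    have h : W =ᶠ[Filter.atTop] (fun _ => (0:ℂ)) := by
      filter_upwards [hωtop] with t ht; simp [hW, ht]
    exact h.trans_isBigO (Asymptotics.isBigO_zero _ _)
  have hWbot : ∀ b : ℝ, 0 < b →
      W =O[nhdsWithin 0 (Set.Ioi 0)] (fun t : ℝ => t ^ (-b)) := by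
    intro b hb
    have h : W =ᶠ[nhdsWithin 0 (Set.Ioi 0)] (fun t => (Real.log t : ℂ) ^ k) := by
      filter_upwards [hωbot] with t ht; simp [hW, ht]
    exact h.trans_isBigO (logpow_isBigO_zero k b hb)
  -- big-O estimates for G (it vanishes near 0 and near ∞)
  have hGtop : ∀ a : ℝ, G =O[Filter.atTop] (fun t : ℝ => t ^ (-a)) := by
    intro a
    have h : G =ᶠ[Filter.atTop] (fun _ => (0:ℂ)) := by
      filter_upwards [hωtop, Filter.eventually_gt_atTop (1:ℝ)] with t ht ht1
      simp [hG, hW, ht, Fk, Set.indicator_of_notMem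
        (fun hm : t ∈ Set.Ioc (0:ℝ) 1 => absurd hm.2 (not_le.2 ht1))]
    exact h.trans_isBigO (Asymptotics.isBigO_zero _ _)
  have hGbot : ∀ b : ℝ, G =O[nhdsWithin 0 (Set.Ioi 0)] (fun t : ℝ => t ^ (-b)) := by
    intro b
    have h : G =ᶠ[nhdsWithin 0 (Set.Ioi 0)] (fun _ => (0:ℂ)) := by
      filter_upwards [hωbot, Ioc_mem_nhdsGT (zero_lt_one (α := ℝ))] with t ht ht1
      simp [hG, hW, ht, Fk, Set.indicator_of_mem ht1]
    exact h.trans_isBigO (Asymptotics.isBigO_zero _ _)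
  constructor
  · -- integrability
    intro s hs
    have ha : 0 < (s + d).re := by rw [Complex.add_re]; linarith
    have mcF : MellinConvergent (Fk k) (s + d) := Fk_conv ha
    have mcG : MellinConvergent G (s + d) :=
      mellinConvergent_of_isBigO_rpow hGloc (hGtop ((s+d).re + 1)) (lt_add_one _)
        (hGbot ((s+d).re - 1)) (sub_one_lt _)
    have hadd := hasMellin_add mcF mcG
    refine hadd.1.congr_fun (fun t _ => ?_) measurableSet_Ioi
    simp only [hG, hW, smul_eq_mul]
    ring
  · refine ⟨fun z => mellin G (z + d), ?_, ?_⟩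
    · intro z
      have hd : DifferentiableAt ℂ (mellin G) (z + d) :=
        mellin_differentiableAt_of_isBigO_rpow hGloc (hGtop ((z+d).re + 1)) (lt_add_one _)
          (hGbot ((z+d).re - 1)) (sub_one_lt _)
      exact DifferentiableAt.comp (g := mellin G) (f := fun z => z + d) z hd
        (differentiableAt_id.add (differentiableAt_const d))
    · intro s hs
      have ha : 0 < (s + d).re := by rw [Complex.add_re]; linarith
      have mcF : MellinConvergent (Fk k) (s + d) := Fk_conv ha
      have mcG : MellinConvergent G (s + d) :=
        mellinConvergent_of_isBigO_rpow hGloc (hGtop ((s+d).re + 1)) (lt_add_one _)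
          (hGbot ((s+d).re - 1)) (sub_one_lt _)
      have hadd := hasMellin_add mcF mcG
      have h1 : (∫ t in Set.Ioi (0:ℝ), (ω t : ℂ) * (t : ℂ) ^ (s + d - 1) * (Real.log t : ℂ) ^ k)
          = mellin (fun t => Fk k t + G t) (s + d) := by
        rw [mellin]
        refine MeasureTheory.integral_congr_ae (Filter.Eventually.of_forall fun t => ?_)
        simp only [hG, hW, smul_eq_mul]
        ring
      rw [h1, hadd.2, mellin_Fk k (s + d) ha]
end

section
/- (Direct Mapping Theorem at 0.) Let a < b be real numbers and let f : (0,∞) → ℂ be continuous with ∫_{(0,∞)} t^{σ-1}|f(t)| dt < ∞ for every σ ∈ (a,b). Let M ∈ ℤ with −M < a, let J ∈ ℕ, and for j < J let p_j ∈ ℂ with −a ≤ Re p_j < M, m_j ∈ ℕ, and a_{jk} ∈ ℂ (0 ≤ k ≤ m_j). Assume there are C, δ > 0 such that |f(t) − Σ_{j<J} Σ_{k=0}^{m_j} a_{jk} t^{p_j} (log t)^k| ≤ C·t^M for all 0 < t < δ. Then there exists F, complex-differentiable on {s : −M < Re s < b} \ {−p_j : j < J}, with F(s) = mellin f s for a <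 Re s < b, such that s ↦ F(s) − Σ_{j<J} Σ_{k=0}^{m_j} a_{jk} (−1)^k k!/(s + p_j)^{k+1} extends to a complex-differentiable function on the whole strip {s : −M < Re s < b}. -/
/-!
Split `f = g + 1_{(1,∞)} f + 1_{(0,1]} P`, where `P = Σ a_{jk} t^{p_j} (log t)^k`.
The Mellin transform of the tail `1_{(1,∞)} f` is holomorphic on `Re s < b`: differentiation
under the integral sign is dominated because `t^{σ-1} |f|` is integrable for every `σ ∈ (a, b)`.
The remainder `g` vanishes on `(1, ∞)` and is `O(t^M)` at `0`, so its transform is holomorphic on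
`Re s > -M`. Finally `∫₀¹ t^{s+p-1} (log t)^k dt = (-1)^k k! / (s+p)^{k+1}`: differentiating
`∫₀¹ t^{s-1} dt = 1/s` in `s` brings down a factor `log t`, and the factor `t^p` shifts `s`
by `p`.
-/

open MeasureTheory Complex

open Set Filter Asymptotics Topology

theorem MeasureTheory.LocallyIntegrableOn.indicator {X E : Type*} [MeasurableSpace X]
    [TopologicalSpace X] [NormedAddCommGroup E] {μ : Measure X} {f : X → E} {s t : Set X}
    (hf : LocallyIntegrableOn f s μ) (ht : MeasurableSet t) :
    LocallyIntegrableOn (t.indicator f) s μ := fun x hx =>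
  let ⟨U, hU, hfU⟩ := hf x hx
  ⟨U, hU, hfU.indicator ht⟩

theorem Real.rpow_mul_abs_log_le {t x c ε : ℝ} (ht : 0 < t) (hε : 0 < ε) (hx : |x - c| ≤ ε) :
    t ^ x * |Real.log t| ≤ ε⁻¹ * (t ^ (c + 2 * ε) + t ^ (c - 2 * ε)) := by
  obtain ⟨hxc, hcx⟩ := abs_le.1 hx
  rcases le_or_gt 1 t with h1 | h1
  · have hlog : |Real.log t| ≤ t ^ ε / ε := by
      rw [abs_of_nonneg (Real.log_nonneg h1)]
      exact Real.log_le_rpow_div ht.le hε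
    calc t ^ x * |Real.log t| ≤ t ^ (c + ε) * (t ^ ε / ε) :=
          mul_le_mul (Real.rpow_le_rpow_of_exponent_le h1 (by linarith)) hlog (abs_nonneg _)
            (by positivity)
      _ = ε⁻¹ * t ^ (c + 2 * ε) := by
          rw [mul_div_assoc', ← Real.rpow_add ht, div_eq_inv_mul]; ring_nf
      _ ≤ _ := by gcongr; exact le_add_of_nonneg_right (by positivity)
  · have hlog : |Real.log t| ≤ t ^ (-ε) / ε := by
      rw [abs_of_neg (Real.log_neg ht h1), ← Real.log_inv, Real.rpow_neg ht.le,
        ← Real.inv_rpow ht.le]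
      exact Real.log_le_rpow_div (inv_nonneg.2 ht.le) hε
    calc t ^ x * |Real.log t| ≤ t ^ (c - ε) * (t ^ (-ε) / ε) :=
          mul_le_mul (Real.rpow_le_rpow_of_exponent_ge ht h1.le (by linarith)) hlog
            (abs_nonneg _) (by positivity)
      _ = ε⁻¹ * t ^ (c - 2 * ε) := by
          rw [mul_div_assoc', ← Real.rpow_add ht, div_eq_inv_mul]; ring_nf
      _ ≤ _ := by gcongr; exact le_add_of_nonneg_left (by positivity)

theorem continuousOn_ofReal_cpow_const (z : ℂ) :
    ContinuousOn (fun t : ℝ => (t : ℂ) ^ z) (Ioi 0) := fun _ ht =>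
  (continuousAt_ofReal_cpow_const _ _ (Or.inr (ne_of_gt ht))).continuousWithinAt

theorem continuousOn_ofReal_log : ContinuousOn (fun t : ℝ => (Real.log t : ℂ)) (Ioi 0) :=
  continuous_ofReal.comp_continuousOn (Real.continuousOn_log.mono fun _ ht => ne_of_gt ht)

theorem continuousOn_sum_cpow_mul_log_pow {ι : Type*} (u : Finset ι) (v : ι → Finset ℕ)
    (p : ι → ℂ) (A : ι → ℕ → ℂ) :
    ContinuousOn (fun t : ℝ =>
      ∑ j ∈ u, ∑ k ∈ v j, A j k * (t : ℂ) ^ p j * (Real.log t : ℂ) ^ k) (Ioi 0) :=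
  continuousOn_finsetSum _ fun _ _ => continuousOn_finsetSum _ fun k _ =>
    (continuousOn_const.mul (continuousOn_ofReal_cpow_const _)).mul (continuousOn_ofReal_log.pow k)

theorem differentiableAt_sum_div_add_pow {ι : Type*} (u : Finset ι) (v : ι → Finset ℕ)
    (p : ι → ℂ) (c : ι → ℕ → ℂ) {s : ℂ} (hs : ∀ j ∈ u, s + p j ≠ 0) :
    DifferentiableAt ℂ (fun z => ∑ j ∈ u, ∑ k ∈ v j, c j k / (z + p j) ^ (k + 1)) s := by
  fun_prop (disch := exact pow_ne_zero _ (hs _ ‹_›))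

section

variable {E : Type*} [NormedAddCommGroup E]

theorem integrableOn_rpow_mul_norm_indicator_Ioi_one {f : ℝ → E} {a b σ : ℝ} (hab : a < b)
    (hfc : AEStronglyMeasurable f (volume.restrict (Ioi 0)))
    (hf : ∀ σ ∈ Ioo a b, IntegrableOn (fun t : ℝ => t ^ (σ - 1) * ‖f t‖) (Ioi 0))
    (hσ : σ < b) :
    IntegrableOn (fun t : ℝ => t ^ (σ - 1) * ‖(Ioi 1).indicator f t‖) (Ioi 0) := by
  obtain ⟨σ', hσ', hσ'b⟩ := exists_between (max_lt hab hσ)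
  refine (hf σ' ⟨(le_max_left _ _).trans_lt hσ', hσ'b⟩).mono' ?_ ?_
  · exact ((continuousOn_id.rpow_const fun t ht => Or.inl (ne_of_gt ht)).aestronglyMeasurable
      measurableSet_Ioi).mul (hfc.indicator measurableSet_Ioi).norm
  · filter_upwards [ae_restrict_mem measurableSet_Ioi] with t (ht : 0 < t)
    rw [Real.norm_eq_abs, abs_of_nonneg (by positivity)]
    by_cases h1 : t ∈ Ioi 1
    · rw [indicator_of_mem h1]
      gcongr
      exacts [h1.le, by linarith [le_max_right a σ]]
    · rw [indicator_of_notMem h1, norm_zero, mul_zero]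
      positivity

variable [NormedSpace ℂ E]

theorem MellinConvergent.indicator {f : ℝ → E} {s : ℂ} (hf : MellinConvergent f s) {T : Set ℝ}
    (hT : MeasurableSet T) : MellinConvergent (T.indicator f) s := by
  have := IntegrableOn.indicator hf hT
  rwa [indicator_smul] at this

theorem mellin_differentiableAt_of_integrableOn {f : ℝ → E} {a b : ℝ}
    (hfc : AEStronglyMeasurable f (volume.restrict (Ioi 0)))
    (hf : ∀ σ ∈ Ioo a b, IntegrableOn (fun t : ℝ => t ^ (σ - 1) * ‖f t‖) (Ioi 0))
    {s : ℂ} (hs : s.re ∈ Ioo a b) : DifferentiableAt ℂ (mellin f) s := by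
  obtain ⟨ε, hε, hεa, hεb⟩ : ∃ ε : ℝ, 0 < ε ∧ a < s.re - 2 * ε ∧ s.re + 2 * ε < b :=
    ⟨min (s.re - a) (b - s.re) / 4, by have := hs.1; have := hs.2; positivity,
      by linarith [min_le_left (s.re - a) (b - s.re), hs.1],
      by linarith [min_le_right (s.re - a) (b - s.re), hs.2]⟩
  set μ := volume.restrict (Ioi (0 : ℝ))
  set F' : ℂ → ℝ → E := fun z t => ((t : ℂ) ^ (z - 1) * Real.log t) • f t
  set bound : ℝ → ℝ := fun t =>
    ε⁻¹ * (t ^ (s.re + 2 * ε - 1) * ‖f t‖ + t ^ (s.re - 2 * ε - 1) * ‖f t‖)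
  have hF_meas (z : ℂ) : AEStronglyMeasurable (fun t : ℝ => (t : ℂ) ^ (z - 1) • f t) μ :=
    ((continuousOn_ofReal_cpow_const _).aestronglyMeasurable measurableSet_Ioi).smul hfc
  have hF'_meas : AEStronglyMeasurable (F' s) μ :=
    (((continuousOn_ofReal_cpow_const _).mul continuousOn_ofReal_log).aestronglyMeasurable
      measurableSet_Ioi).smul hfc
  have hF_int : Integrable (fun t : ℝ => (t : ℂ) ^ (s - 1) • f t) μ :=
    (mellin_convergent_iff_norm subset_rfl measurableSet_Ioi hfc).2 (hf _ hs)
  have h_bound : ∀ᵐ t ∂μ, ∀ z ∈ Metric.ball s ε, ‖F' z t‖ ≤ bound t := by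
    filter_upwards [ae_restrict_mem measurableSet_Ioi] with t ht z hz
    have hre : |(z.re - 1) - (s.re - 1)| ≤ ε := by
      calc |(z.re - 1) - (s.re - 1)| = |(z - s).re| := by simp
        _ ≤ ε := (abs_re_le_norm _).trans (mem_ball_iff_norm.1 hz).le
    calc ‖F' z t‖ = t ^ (z.re - 1) * |Real.log t| * ‖f t‖ := by
          simp [F', norm_smul, norm_cpow_eq_rpow_re_of_pos ht]
      _ ≤ ε⁻¹ * (t ^ (s.re - 1 + 2 * ε) + t ^ (s.re - 1 - 2 * ε)) * ‖f t‖ := by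
          gcongr ?_ * _
          exact Real.rpow_mul_abs_log_le ht hε hre
      _ = bound t := by simp only [bound]; ring_nf
  have h_int : Integrable bound μ :=
    ((hf _ ⟨by linarith, hεb⟩).add (hf _ ⟨hεa, by linarith⟩)).const_mul ε⁻¹
  have h_diff : ∀ᵐ (t : ℝ) ∂μ, ∀ z ∈ Metric.ball s ε,
      HasDerivAt (fun w : ℂ => (t : ℂ) ^ (w - 1) • f t) (F' z t) z := by
    filter_upwards [ae_restrict_mem measurableSet_Ioi] with t ht z _
    have hcpow_deriv := ((hasDerivAt_id' z).sub_const 1).const_cpow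
      (Or.inl (ofReal_ne_zero.2 (ne_of_gt ht)))
    convert hcpow_deriv.smul_const (f t) using 1
    simp [F', ofReal_log ht.le]
  exact (hasDerivAt_integral_of_dominated_loc_of_deriv_le (Metric.ball_mem_nhds s hε)
    (.of_forall hF_meas) hF_int hF'_meas h_bound h_int h_diff).2.differentiableAt

theorem mellin_differentiableAt_indicator_Ioi_one {f : ℝ → E} {a b : ℝ} (hab : a < b)
    (hfc : AEStronglyMeasurable f (volume.restrict (Ioi 0)))
    (hf : ∀ σ ∈ Ioo a b, IntegrableOn (fun t : ℝ => t ^ (σ - 1) * ‖f t‖) (Ioi 0))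
    {s : ℂ} (hs : s.re < b) : DifferentiableAt ℂ (mellin ((Ioi 1).indicator f)) s :=
  mellin_differentiableAt_of_integrableOn (hfc.indicator measurableSet_Ioi)
    (fun _ hσ => integrableOn_rpow_mul_norm_indicator_Ioi_one hab hfc hf hσ.2)
    (a := s.re - 1) ⟨by linarith, hs⟩

theorem mellin_differentiableAt_sub_indicator {f P : ℝ → E} {r : ℝ}
    (hf : LocallyIntegrableOn f (Ioi 0)) (hP : LocallyIntegrableOn P (Ioi 0))
    (hfP : (fun t => f t - P t) =O[𝓝[>] 0] (· ^ r)) {s : ℂ} (hs : -r < s.re) :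
    DifferentiableAt ℂ
      (mellin fun t => f t - (Ioi 1).indicator f t - (Ioc 0 1).indicator P t) s := by
  refine mellin_differentiableAt_of_isBigO_rpow (a := s.re + 1) (b := -r)
    ((hf.sub (hf.indicator measurableSet_Ioi)).sub (hP.indicator measurableSet_Ioc))
    (EventuallyEq.trans_isBigO ?_ (isBigO_zero _ _)) (lt_add_one _) ?_ hs
  · filter_upwards [eventually_gt_atTop 1] with t ht
    simp [indicator_of_mem (show t ∈ Ioi 1 from ht), ht.not_ge]
  · rw [neg_neg]
    refine hfP.congr' ?_ EventuallyEq.rfl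
    filter_upwards [Ioo_mem_nhdsGT one_pos] with t ht
    simp [ht.1, ht.2.le]

theorem mellin_sub_indicator_eq {f P : ℝ → E} {s : ℂ} {m : E} (hf : MellinConvergent f s)
    (hP : HasMellin ((Ioc 0 1).indicator P) s m) :
    mellin (fun t => f t - (Ioi 1).indicator f t - (Ioc 0 1).indicator P t) s
      = mellin f s - mellin ((Ioi 1).indicator f) s - m := by
  have hf₁ := hasMellin_sub hf (hf.indicator (measurableSet_Ioi (a := 1)))
  rw [← hf₁.2, ← hP.2]
  exact (hasMellin_sub hf₁.1 hP.1).2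

theorem hasMellin_sum {ι : Type*} (u : Finset ι) {f : ι → ℝ → E} {s : ℂ} {m : ι → E}
    (h : ∀ i ∈ u, HasMellin (f i) s (m i)) :
    HasMellin (fun t => ∑ i ∈ u, f i t) s (∑ i ∈ u, m i) := by
  have hconv : ∀ i ∈ u, MellinConvergent (f i) s := fun i hi => (h i hi).1
  refine ⟨?_, ?_⟩
  · simpa only [MellinConvergent, IntegrableOn, Finset.smul_sum] using
      integrable_finsetSum u hconv
  · simp only [mellin, Finset.smul_sum]
    rw [integral_finsetSum u hconv]
    exact Finset.sum_congr rfl fun i hi => (h i hi).2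

theorem indicator_log_pow_succ (T : Set ℝ) (k : ℕ) :
    T.indicator (fun t : ℝ => (Real.log t : ℂ) ^ (k + 1))
      = fun t => Real.log t • T.indicator (fun t : ℝ => (Real.log t : ℂ) ^ k) t := by
  rw [← indicator_smul]
  simp only [real_smul, pow_succ']

theorem isBigO_indicator_log_pow_nhdsGT_zero (k : ℕ) {b : ℝ} (hb : 0 < b) :
    (Ioc 0 1).indicator (fun t : ℝ => (Real.log t : ℂ) ^ k) =O[𝓝[>] 0] (· ^ (-b)) := by
  induction k generalizing b with
  | zero =>
    refine IsBigO.of_bound 1 ?_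
    filter_upwards [Ioo_mem_nhdsGT one_pos] with t ht
    rw [indicator_of_mem (Ioo_subset_Ioc_self ht),
      Real.norm_of_nonneg (Real.rpow_nonneg ht.1.le _)]
    simpa using Real.one_le_rpow_of_pos_of_le_one_of_nonpos ht.1 ht.2.le (neg_nonpos.2 hb.le)
  | succ k ih =>
    rw [indicator_log_pow_succ]
    exact isBigO_rpow_zero_log_smul (half_lt_self hb) (ih (half_pos hb))

theorem hasMellin_log_pow_Ioc (k : ℕ) {s : ℂ} (hs : 0 < s.re) :
    HasMellin ((Ioc 0 1).indicator fun t : ℝ => (Real.log t : ℂ) ^ k) s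
      ((-1) ^ k * k.factorial / s ^ (k + 1)) := by
  induction k generalizing s with
  | zero => simpa using hasMellin_one_Ioc hs
  | succ k ih =>
    have hloc : LocallyIntegrableOn ((Ioc 0 1).indicator fun t : ℝ => (Real.log t : ℂ) ^ k)
        (Ioi 0) :=
      ((continuousOn_ofReal_log.pow k).locallyIntegrableOn measurableSet_Ioi).indicator
        measurableSet_Ioc
    have htop : (Ioc 0 1).indicator (fun t : ℝ => (Real.log t : ℂ) ^ k)
        =ᶠ[atTop] fun _ => 0 := by
      filter_upwards [eventually_gt_atTop 1] with t ht
      exact indicator_of_notMem (fun h => ht.not_ge h.2) _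
    obtain ⟨hconv, hderiv⟩ := mellin_hasDerivAt_of_isBigO_rpow (a := s.re + 1) hloc
      (htop.trans_isBigO (isBigO_zero _ _)) (lt_add_one _)
      (isBigO_indicator_log_pow_nhdsGT_zero k (half_pos hs)) (half_lt_self hs)
    rw [← indicator_log_pow_succ] at hconv hderiv
    have hs0 : s ≠ 0 := fun h => by simp [h] at hs
    have hformula := ((hasDerivAt_const s ((-1 : ℂ) ^ k * k.factorial)).div
      (hasDerivAt_pow (k + 1) s) (pow_ne_zero _ hs0)).congr_of_eventuallyEq
      (eventually_of_mem ((continuous_re.isOpen_preimage _ isOpen_Ioi).mem_nhds hs)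
        fun z hz => (ih hz).2)
    refine ⟨hconv, (hderiv.unique hformula).trans ?_⟩
    field_simp
    push_cast [Nat.factorial_succ]
    ring

theorem hasMellin_cpow_mul_log_pow_Ioc (a : ℂ) (k : ℕ) {s : ℂ} (hs : 0 < s.re + a.re) :
    HasMellin ((Ioc 0 1).indicator fun t : ℝ => (t : ℂ) ^ a * (Real.log t : ℂ) ^ k) s
      ((-1) ^ k * k.factorial / (s + a) ^ (k + 1)) := by
  have := hasMellin_log_pow_Ioc k (by rwa [add_re] : 0 < (s + a).re)
  simp_rw [HasMellin, ← MellinConvergent.cpow_smul, ← mellin_cpow_smul, ← indicator_smul,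
    smul_eq_mul] at this
  exact this

theorem hasMellin_indicator_sum_cpow_mul_log_pow {ι : Type*} (u : Finset ι) (v : ι → Finset ℕ)
    (p : ι → ℂ) (A : ι → ℕ → ℂ) {s : ℂ} (hs : ∀ j ∈ u, 0 < s.re + (p j).re) :
    HasMellin ((Ioc 0 1).indicator fun t : ℝ =>
        ∑ j ∈ u, ∑ k ∈ v j, A j k * (t : ℂ) ^ p j * (Real.log t : ℂ) ^ k) s
      (∑ j ∈ u, ∑ k ∈ v j, A j k * ((-1) ^ k * k.factorial) / (s + p j) ^ (k + 1)) := by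
  have hterm : ∀ j ∈ u, ∀ k, HasMellin (fun t => (Ioc 0 1).indicator
      (fun t : ℝ => A j k * (t : ℂ) ^ p j * (Real.log t : ℂ) ^ k) t) s
      (A j k * ((-1) ^ k * k.factorial) / (s + p j) ^ (k + 1)) := by
    intro j hj k
    have h := hasMellin_cpow_mul_log_pow_Ioc (p j) k (hs j hj)
    have := hasMellin_const_smul h.1 (A j k)
    rw [h.2, ← indicator_const_smul] at this
    simpa only [smul_eq_mul, mul_assoc, mul_div_assoc] using this
  convert hasMellin_sum u fun j hj => hasMellin_sum (v j) fun k _ => hterm j hj k using 1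
  funext t
  by_cases ht : t ∈ Ioc 0 1 <;> simp [ht]

end

theorem mellin_direct_mapping_general
    (a b : ℝ) (hab : a < b) (f : ℝ → ℂ) (hf : ContinuousOn f (Set.Ioi (0 : ℝ)))
    (hint : ∀ σ ∈ Set.Ioo a b,
      IntegrableOn (fun t : ℝ => t ^ (σ - 1) * ‖f t‖) (Set.Ioi (0 : ℝ)))
    (M : ℤ) (J : ℕ) (p : Fin J → ℂ)
    (hp : ∀ j, -a ≤ (p j).re ∧ (p j).re < (M : ℝ))
    (m : Fin J → ℕ) (A : Fin J → ℕ → ℂ)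
    (hasymp : ∃ C δ : ℝ, 0 < C ∧ 0 < δ ∧ ∀ t : ℝ, 0 < t → t < δ →
      ‖f t - ∑ j, ∑ k ∈ Finset.range (m j + 1),
          A j k * (t : ℂ) ^ (p j) * (Real.log t : ℂ) ^ k‖
        ≤ C * t ^ (M : ℝ)) :
    ∃ F : ℂ → ℂ,
      (∀ s : ℂ, (-M : ℝ) < s.re → s.re < b → (∀ j, s ≠ -(p j)) →
        DifferentiableAt ℂ F s) ∧
      (∀ s : ℂ, a < s.re → s.re < b → F s = mellin f s) ∧
      ∃ G : ℂ → ℂ,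
        (∀ s : ℂ, (-M : ℝ) < s.re → s.re < b → DifferentiableAt ℂ G s) ∧
        ∀ s : ℂ, (-M : ℝ) < s.re → s.re < b → (∀ j, s ≠ -(p j)) →
          G s = F s - ∑ j, ∑ k ∈ Finset.range (m j + 1),
            A j k * ((-1) ^ k * (k.factorial : ℂ)) / (s + p j) ^ (k + 1) := by
  obtain ⟨C, δ, -, hδ, hbound⟩ := hasymp
  set P : ℝ → ℂ := fun t => ∑ j, ∑ k ∈ Finset.range (m j + 1),
    A j k * (t : ℂ) ^ (p j) * (Real.log t : ℂ) ^ k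
  set S : ℂ → ℂ := fun s => ∑ j, ∑ k ∈ Finset.range (m j + 1),
    A j k * ((-1) ^ k * (k.factorial : ℂ)) / (s + p j) ^ (k + 1)
  set G : ℂ → ℂ := fun s =>
    mellin (fun t => f t - (Ioi 1).indicator f t - (Ioc 0 1).indicator P t) s
      + mellin ((Ioi 1).indicator f) s
  have hfc := hf.aestronglyMeasurable (μ := volume) measurableSet_Ioi
  have hfP : (fun t => f t - P t) =O[𝓝[>] 0] (· ^ (M : ℝ)) := by
    refine IsBigO.of_bound C ?_
    filter_upwards [Ioo_mem_nhdsGT hδ] with t ht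
    rw [Real.norm_of_nonneg (Real.rpow_nonneg ht.1.le _)]
    exact hbound t ht.1 ht.2
  have hG (s : ℂ) (hs : (-M : ℝ) < s.re) (hsb : s.re < b) : DifferentiableAt ℂ G s :=
    (mellin_differentiableAt_sub_indicator (hf.locallyIntegrableOn measurableSet_Ioi)
      ((continuousOn_sum_cpow_mul_log_pow _ _ p A).locallyIntegrableOn measurableSet_Ioi)
      hfP hs).add (mellin_differentiableAt_indicator_Ioi_one hab hfc hint hsb)
  refine ⟨fun s => G s + S s, fun s hs hsb hpole => (hG s hs hsb).add
      (differentiableAt_sum_div_add_pow _ _ p _ fun j _ h =>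
        hpole j (eq_neg_of_add_eq_zero_left h)),
    fun s hsa hsb => ?_, G, hG, fun s _ _ _ => (add_sub_cancel_right _ _).symm⟩
  have hf_conv : MellinConvergent f s :=
    (mellin_convergent_iff_norm subset_rfl measurableSet_Ioi hfc).2 (hint _ ⟨hsa, hsb⟩)
  have hP_mellin : HasMellin ((Ioc 0 1).indicator P) s (S s) :=
    hasMellin_indicator_sum_cpow_mul_log_pow _ _ p A fun j _ => by linarith [(hp j).1]
  simp only [G]
  rw [mellin_sub_indicator_eq hf_conv hP_mellin]
  ring

/-- Direct Mapping Theorem at `0`: if `f` has a log-polyhomogeneous asymptotic expansion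
at `0` up to order `t^M`, then its Mellin transform extends meromorphically to the strip
`-M < Re s < b`, with singular expansion `Σ_{j,k} a_{jk} (-1)^k k!/(s+p_j)^{k+1}`. -/
theorem mellin_direct_mapping
    (a b : ℝ) (hab : a < b) (f : ℝ → ℂ) (hf : ContinuousOn f (Set.Ioi (0 : ℝ)))
    (hint : ∀ σ ∈ Set.Ioo a b,
      IntegrableOn (fun t : ℝ => t ^ (σ - 1) * ‖f t‖) (Set.Ioi (0 : ℝ)))
    (M : ℤ) (hM : (-M : ℝ) < a) (J : ℕ) (p : Fin J → ℂ)
    (hp : ∀ j, -a ≤ (p j).re ∧ (p j).re < (M : ℝ))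
    (m : Fin J → ℕ) (A : Fin J → ℕ → ℂ)
    (hasymp : ∃ C δ : ℝ, 0 < C ∧ 0 < δ ∧ ∀ t : ℝ, 0 < t → t < δ →
      ‖f t - ∑ j, ∑ k ∈ Finset.range (m j + 1),
          A j k * (t : ℂ) ^ (p j) * (Real.log t : ℂ) ^ k‖
        ≤ C * t ^ (M : ℝ)) :
    ∃ F : ℂ → ℂ,
      (∀ s : ℂ, (-M : ℝ) < s.re → s.re < b → (∀ j, s ≠ -(p j)) →
        DifferentiableAt ℂ F s) ∧
      (∀ s : ℂ, a < s.re → s.re < b → F s = mellin f s) ∧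
      ∃ G : ℂ → ℂ,
        (∀ s : ℂ, (-M : ℝ) < s.re → s.re < b → DifferentiableAt ℂ G s) ∧
        ∀ s : ℂ, (-M : ℝ) < s.re → s.re < b → (∀ j, s ≠ -(p j)) →
          G s = F s - ∑ j, ∑ k ∈ Finset.range (m j + 1),
            A j k * ((-1) ^ k * (k.factorial : ℂ)) / (s + p j) ^ (k + 1) :=
  mellin_direct_mapping_general a b hab f hf hint M J p hp m A hasymp
end

section
/- (Fourier transform of x^a_+ as a boundary value.) Let a ∈ ℂ with Re a > −1 and let φ ∈ 𝓢(ℝ,ℂ). Define Fφ(x) := ∫_{ξ ∈ ℝ} exp(−i·x·ξ) φ(ξ) dξ. Then ∫_{x ∈ (0,∞)} x^a · Fφ(x) dx (which converges absolutely) equals the limit lim_{η → 0⁺} Γ(a+1) · ∫_{ξ ∈ ℝ} (η + i·ξ)^{−a−1} φ(ξ) dξ; in particular this limit exists. -/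
/-!
For `Re z > 0` one has `∫₀^∞ x^a e^{-zx} dx = Γ(a+1) z^{-a-1}`: this is Euler's integral for real
`z > 0`, and both sides are holomorphic on the right half-plane. Taking `z = η + iξ` and using
Fubini, `Γ(a+1) ∫ (η + iξ)^{-a-1} φ(ξ) dξ = ∫₀^∞ e^{-ηx} x^a Fφ(x) dx` for `η > 0`. Since `Fφ` is a
rescaling of the Schwartz function `𝓕φ`, the function `x^a Fφ(x)` is integrable on `(0, ∞)`, and
dominated convergence lets `η → 0⁺`.
-/

open MeasureTheory Complex Set Filter Topology FourierTransform
open scoped Real SchwartzMap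

lemma SchwartzMap.mellinConvergent_s13 {E : Type*} [NormedAddCommGroup E] [NormedSpace ℂ E]
    (f : 𝓢(ℝ, E)) {s : ℂ} (hs : 0 < s.re) : MellinConvergent f s := by
  refine mellinConvergent_of_isBigO_rpow (a := s.re + 1) (b := 0)
    (f.continuous.locallyIntegrable.locallyIntegrableOn _) ?_ (lt_add_one _) ?_ hs
  · refine ((f.isBigO_cocompact_rpow (-(s.re + 1))).mono atTop_le_cocompact).congr'
      EventuallyEq.rfl ?_
    filter_upwards [eventually_ge_atTop 0] with x hx
    rw [Real.norm_of_nonneg hx]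
  · simpa using ((f.continuous.tendsto 0).mono_left nhdsWithin_le_nhds).isBigO_one ℝ

lemma integral_exp_neg_I_mul_mul_eq_fourier (φ : ℝ → ℂ) (x : ℝ) :
    ∫ ξ : ℝ, exp (-(I * x * ξ)) * φ ξ = 𝓕 φ ((2 * π)⁻¹ * x) := by
  rw [Real.fourier_real_eq_integral_exp_smul]
  congr 1 with ξ
  rw [smul_eq_mul]
  congr 2
  push_cast
  field_simp

lemma tendsto_setIntegral_exp_neg_mul_mul_Ioi {g : ℝ → ℂ} (hg : IntegrableOn g (Ioi 0)) :
    Tendsto (fun η : ℝ => ∫ x in Ioi (0 : ℝ), exp (-(η * x)) * g x) (𝓝[>] 0)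
      (𝓝 (∫ x in Ioi (0 : ℝ), g x)) := by
  refine tendsto_integral_filter_of_dominated_convergence (fun x => ‖g x‖)
    (Eventually.of_forall fun η => (by fun_prop : Continuous fun x : ℝ => exp (-(η * x)))
      |>.aestronglyMeasurable.mul hg.aestronglyMeasurable) ?_ hg.norm ?_
  · filter_upwards [self_mem_nhdsWithin] with η (hη : 0 < η)
    filter_upwards [ae_restrict_mem measurableSet_Ioi] with x (hx : 0 < x)
    rw [norm_mul, norm_exp]
    refine mul_le_of_le_one_left (norm_nonneg _) (Real.exp_le_one_iff.2 ?_)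
    simp only [neg_re, mul_re, ofReal_re, ofReal_im, mul_zero, sub_zero, neg_nonpos]
    positivity
  · refine Eventually.of_forall fun x => ?_
    have hcont : Continuous fun η : ℝ => exp (-(η * x)) * g x := by fun_prop
    simpa using (hcont.tendsto 0).mono_left nhdsWithin_le_nhds

section

variable {a : ℂ}

lemma integrableOn_cpow_mul_exp_neg_mul (ha : -1 < a.re) {z : ℂ} (hz : 0 < z.re) :
    IntegrableOn (fun x : ℝ => (x : ℂ) ^ a * exp (-(z * x))) (Ioi 0) := by
  refine (integrableOn_rpow_mul_exp_neg_mul_rpow ha one_pos hz).mono' (by fun_prop) ?_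
  filter_upwards [ae_restrict_mem measurableSet_Ioi] with x (hx : 0 < x)
  simp [norm_cpow_eq_rpow_re_of_pos hx, norm_exp]

lemma hasDerivAt_integral_cpow_mul_exp_neg_mul (ha : -1 < a.re) {z : ℂ} (hz : 0 < z.re) :
    HasDerivAt (fun w : ℂ => ∫ x in Ioi (0 : ℝ), (x : ℂ) ^ a * exp (-(w * x)))
      (∫ x in Ioi (0 : ℝ), -((x : ℂ) ^ (a + 1) * exp (-(z * x)))) z := by
  have hnhds : {w : ℂ | z.re / 2 < w.re} ∈ 𝓝 z :=
    (isOpen_lt continuous_const continuous_re).mem_nhds (half_lt_self hz)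
  refine (hasDerivAt_integral_of_dominated_loc_of_deriv_le (μ := volume.restrict (Ioi (0 : ℝ)))
    (F := fun w (x : ℝ) => (x : ℂ) ^ a * exp (-(w * x)))
    (F' := fun w (x : ℝ) => -((x : ℂ) ^ (a + 1) * exp (-(w * x)))) hnhds
    (Eventually.of_forall fun w => by fun_prop) (integrableOn_cpow_mul_exp_neg_mul ha hz)
    (by fun_prop) (bound := fun x => ‖(x : ℂ) ^ (a + 1) * exp (-((z.re / 2 : ℝ) * x))‖) ?_
    (integrableOn_cpow_mul_exp_neg_mul (by simp only [add_re, one_re]; linarith)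
      (by simpa using half_pos hz)).norm ?_).2
  · filter_upwards [ae_restrict_mem measurableSet_Ioi] with x (hx : 0 < x) w (hw : _ < _)
    simp only [norm_neg, norm_mul, norm_exp, neg_re, mul_re, ofReal_re, ofReal_im, mul_zero,
      sub_zero]
    gcongr
  · filter_upwards [ae_restrict_mem measurableSet_Ioi] with x (hx : 0 < x) w _
    have hpow : (x : ℂ) ^ (a + 1) = (x : ℂ) ^ a * x := by
      rw [cpow_add _ _ (ofReal_ne_zero.2 hx.ne'), cpow_one]
    rw [hpow]
    have hexp : HasDerivAt (fun w : ℂ => -(w * x)) (-(x : ℂ)) w :=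
      (hasDerivAt_mul_const (x : ℂ)).neg
    exact (hexp.cexp.const_mul ((x : ℂ) ^ a)).congr_deriv (by ring)

lemma integral_cpow_mul_exp_neg_mul_Ioi_of_re_pos (ha : -1 < a.re) {z : ℂ} (hz : 0 < z.re) :
    ∫ x in Ioi (0 : ℝ), (x : ℂ) ^ a * exp (-(z * x)) = Gamma (a + 1) * z ^ (-a - 1) := by
  set U : Set ℂ := {w | 0 < w.re}
  have hU : IsOpen U := isOpen_lt continuous_const continuous_re
  have hf : AnalyticOnNhd ℂ (fun w : ℂ => ∫ x in Ioi (0 : ℝ), (x : ℂ) ^ a * exp (-(w * x))) U :=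
    DifferentiableOn.analyticOnNhd (fun w hw =>
      (hasDerivAt_integral_cpow_mul_exp_neg_mul ha hw).differentiableAt.differentiableWithinAt) hU
  have hg : AnalyticOnNhd ℂ (fun w : ℂ => Gamma (a + 1) * w ^ (-a - 1)) U :=
    DifferentiableOn.analyticOnNhd (fun w hw => ((differentiableAt_id.cpow
      (differentiableAt_const _) (Or.inl hw)).const_mul _).differentiableWithinAt) hU
  have hreal : ∀ r : ℝ, 0 < r → ∫ x in Ioi (0 : ℝ), (x : ℂ) ^ a * exp (-(r * x)) =
      Gamma (a + 1) * (r : ℂ) ^ (-a - 1) := by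
    intro r hr
    have h := integral_cpow_mul_exp_neg_mul_Ioi (a := a + 1)
      (by simp only [add_re, one_re]; linarith) hr
    rw [add_sub_cancel_right] at h
    rw [h, mul_comm, one_div,
      inv_cpow _ _ (by simp [arg_ofReal_of_nonneg hr.le, Real.pi_ne_zero.symm]), ← cpow_neg,
      neg_add']
  have hfreq : ∃ᶠ w in 𝓝[≠] (1 : ℂ), (∫ x in Ioi (0 : ℝ), (x : ℂ) ^ a * exp (-(w * x))) =
      Gamma (a + 1) * w ^ (-a - 1) := by
    have hmap : Tendsto ((↑) : ℝ → ℂ) (𝓝[≠] 1) (𝓝[≠] 1) :=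
      continuous_ofReal.continuousWithinAt.tendsto_nhdsWithin fun r hr => by simpa using hr
    refine hmap.frequently (Eventually.frequently ?_)
    filter_upwards [nhdsWithin_le_nhds (lt_mem_nhds one_pos)] with r hr
    simpa using hreal r hr
  exact hf.eqOn_of_preconnected_of_frequently_eq hg (convex_halfSpace_re_gt 0).isPreconnected
    (by simp [U]) hfreq hz

lemma Gamma_mul_integral_cpow_mul_eq_setIntegral (ha : -1 < a.re) {φ : ℝ → ℂ}
    (hφ : Integrable φ) {η : ℝ} (hη : 0 < η) :
    Gamma (a + 1) * ∫ ξ : ℝ, ((η : ℂ) + I * ξ) ^ (-a - 1) * φ ξ =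
      ∫ x in Ioi (0 : ℝ), exp (-(η * x)) * ((x : ℂ) ^ a * ∫ ξ : ℝ, exp (-(I * x * ξ)) * φ ξ) := by
  have hre : ∀ ξ : ℝ, ((η : ℂ) + I * ξ).re = η := by simp
  have hK : Integrable (fun p : ℝ × ℝ => (p.2 : ℂ) ^ a * exp (-((η + I * p.1) * p.2)) * φ p.1)
      (volume.prod (volume.restrict (Ioi 0))) := by
    refine (hφ.norm.mul_prod (integrableOn_cpow_mul_exp_neg_mul ha (z := η)
      (by simpa using hη)).norm).mono' ((by fun_prop : Measurable fun p : ℝ × ℝ =>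
        (p.2 : ℂ) ^ a * exp (-((η + I * p.1) * p.2))).aestronglyMeasurable.mul hφ.1.comp_fst)
      (Eventually.of_forall fun p => le_of_eq ?_)
    simp [norm_exp, hre]
    ring
  calc Gamma (a + 1) * ∫ ξ : ℝ, ((η : ℂ) + I * ξ) ^ (-a - 1) * φ ξ
      = ∫ ξ : ℝ, ∫ x in Ioi (0 : ℝ), (x : ℂ) ^ a * exp (-((η + I * ξ) * x)) * φ ξ := by
        rw [← integral_const_mul]
        congr 1 with ξ
        rw [integral_mul_const, integral_cpow_mul_exp_neg_mul_Ioi_of_re_pos ha (by simpa [hre]),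
          mul_assoc]
    _ = ∫ x in Ioi (0 : ℝ), ∫ ξ : ℝ, (x : ℂ) ^ a * exp (-((η + I * ξ) * x)) * φ ξ :=
        integral_integral_swap hK
    _ = _ := by
        congr 1 with x
        rw [← integral_const_mul, ← integral_const_mul]
        congr 1 with ξ
        rw [show -(((η : ℂ) + I * ξ) * x) = -(η * x) + -(I * x * ξ) by ring, exp_add]
        ring

lemma SchwartzMap.integrableOn_cpow_mul_integral_exp_neg_I_mul (ha : -1 < a.re) (φ : 𝓢(ℝ, ℂ)) :
    IntegrableOn (fun x : ℝ => (x : ℂ) ^ a * ∫ ξ : ℝ, exp (-(I * x * ξ)) * φ ξ) (Ioi 0) := by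
  have h := (MellinConvergent.comp_mul_left (by positivity : 0 < (2 * π)⁻¹)).2
    ((𝓕 φ).mellinConvergent_s13 (s := a + 1) (by simp only [add_re, one_re]; linarith))
  simpa [MellinConvergent, integral_exp_neg_I_mul_mul_eq_fourier, SchwartzMap.fourier_coe] using h

end

/-- The Fourier transform of `x^a_+` as a boundary value: for `Re a > -1` and a Schwartz
function `φ`, the pairing `∫_0^∞ x^a (Fφ)(x) dx` equals the limit as `η → 0⁺` of
`Γ(a+1) ∫_ℝ (η + iξ)^{-a-1} φ(ξ) dξ`. -/
theorem fourier_cpow_pos_boundary_value (a : ℂ) (ha : -1 < a.re) (φ : SchwartzMap ℝ ℂ) :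
    IntegrableOn (fun x : ℝ => (x : ℂ) ^ a *
      ∫ ξ : ℝ, Complex.exp (-(Complex.I * x * ξ)) * φ ξ) (Set.Ioi (0 : ℝ)) ∧
    Filter.Tendsto
      (fun η : ℝ => Complex.Gamma (a + 1) *
        ∫ ξ : ℝ, ((η : ℂ) + Complex.I * ξ) ^ (-a - 1) * φ ξ)
      (nhdsWithin 0 (Set.Ioi 0))
      (nhds (∫ x in Set.Ioi (0 : ℝ), (x : ℂ) ^ a *
        ∫ ξ : ℝ, Complex.exp (-(Complex.I * x * ξ)) * φ ξ)) := by
  have hF := φ.integrableOn_cpow_mul_integral_exp_neg_I_mul ha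
  refine ⟨hF, (tendsto_setIntegral_exp_neg_mul_mul_Ioi hF).congr' ?_⟩
  filter_upwards [self_mem_nhdsWithin] with η hη
  exact (Gamma_mul_integral_cpow_mul_eq_setIntegral ha φ.integrable hη).symm
end

section
/- (Laplace integral of x^a (log x)^l.) Let l ∈ ℕ, a ∈ ℂ with Re a > −1, and z ∈ ℂ with Re z > 0. Then ∫_{x ∈ (0,∞)} x^a · (log x)^l · exp(−z·x) dx equals the l-th iterated derivative, evaluated at a, of the function w ↦ Γ(w+1) · z^{−w−1} (so in particular for l = 1 it equals z^{−a−1}·(Γ'(a+1) − Γ(a+1)·log z), with the principal branch of log). -/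
/-! The integral is the Mellin transform at `a + 1` of `t ↦ (log t)^l e^{-zt}`, and
differentiating a Mellin transform in `s` multiplies the integrand by `log t`. So the integral
is the `l`-th derivative of the Mellin transform of `e^{-zt}`, which is `Γ(s) z^{-s}`: for real
`z > 0` by the substitution `t ↦ t / z`, and for `Re z > 0` by analytic continuation in `z`. -/

open MeasureTheory Complex Set Filter Asymptotics Topology

theorem isBigO_log_pow_mul_cexp_neg_mul_atTop (l : ℕ) {z : ℂ} (hz : 0 < z.re) (a : ℝ) :
    (fun t : ℝ => (Real.log t : ℂ) ^ l * cexp (-(z * t))) =O[atTop] (· ^ (-a)) := by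
  induction l generalizing a with
  | zero =>
    have hexp : (fun t : ℝ => cexp (-(z * t))) =O[atTop] fun t => Real.exp (-z.re * t) :=
      isBigO_of_le _ fun t => by simp [Complex.norm_exp]
    simpa using hexp.trans (isLittleO_exp_neg_mul_rpow_atTop hz _).isBigO
  | succ l ih =>
    refine (isBigO_rpow_top_log_smul (lt_add_one a) (ih (a + 1))).congr_left fun t => ?_
    simp only [Complex.real_smul, pow_succ]
    ring

theorem isBigO_log_pow_mul_cexp_neg_mul_nhdsGT_zero (l : ℕ) (z : ℂ) {b : ℝ} (hb : 0 < b) :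
    (fun t : ℝ => (Real.log t : ℂ) ^ l * cexp (-(z * t))) =O[𝓝[>] 0] (· ^ (-b)) := by
  induction l generalizing b with
  | zero =>
    have hexp : (fun t : ℝ => cexp (-(z * t))) =O[𝓝[>] 0] fun _ => (1 : ℝ) :=
      ((by fun_prop : Continuous fun t : ℝ => cexp (-(z * t))).tendsto 0).mono_left
        nhdsWithin_le_nhds |>.isBigO_one ℝ
    have hone : (fun _ : ℝ => (1 : ℝ)) =O[𝓝[>] 0] (· ^ (-b)) := by
      refine IsBigO.of_bound 1 ?_
      filter_upwards [Ioo_mem_nhdsGT one_pos] with t ht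
      rw [norm_one, one_mul, Real.norm_of_nonneg (Real.rpow_nonneg ht.1.le _)]
      exact Real.one_le_rpow_of_pos_of_le_one_of_nonpos ht.1 ht.2.le (by linarith)
    simpa using hexp.trans hone
  | succ l ih =>
    refine (isBigO_rpow_zero_log_smul (half_lt_self hb) (ih (half_pos hb))).congr_left fun t => ?_
    simp only [Complex.real_smul, pow_succ]
    ring

theorem locallyIntegrableOn_log_pow_mul_cexp_neg_mul (l : ℕ) (z : ℂ) :
    LocallyIntegrableOn (fun t : ℝ => (Real.log t : ℂ) ^ l * cexp (-(z * t))) (Ioi 0) := by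
  refine ContinuousOn.locallyIntegrableOn ?_ measurableSet_Ioi
  have hlog : ContinuousOn Real.log (Ioi 0) := Real.continuousOn_log.mono fun t ht => ne_of_gt ht
  fun_prop

theorem mellinConvergent_log_pow_mul_cexp_neg_mul (l : ℕ) {z s : ℂ} (hz : 0 < z.re)
    (hs : 0 < s.re) :
    MellinConvergent (fun t : ℝ => (Real.log t : ℂ) ^ l * cexp (-(z * t))) s :=
  mellinConvergent_of_isBigO_rpow (locallyIntegrableOn_log_pow_mul_cexp_neg_mul l z)
    (isBigO_log_pow_mul_cexp_neg_mul_atTop l hz (s.re + 1)) (lt_add_one _)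
    (isBigO_log_pow_mul_cexp_neg_mul_nhdsGT_zero l z (half_pos hs)) (half_lt_self hs)

theorem hasDerivAt_mellin_log_pow_mul_cexp_neg_mul (l : ℕ) {z s : ℂ} (hz : 0 < z.re)
    (hs : 0 < s.re) :
    HasDerivAt (mellin fun t : ℝ => (Real.log t : ℂ) ^ l * cexp (-(z * t)))
      (mellin (fun t : ℝ => (Real.log t : ℂ) ^ (l + 1) * cexp (-(z * t))) s) s := by
  have hlog_smul : (fun t : ℝ => Real.log t • ((Real.log t : ℂ) ^ l * cexp (-(z * t))))
      = fun t : ℝ => (Real.log t : ℂ) ^ (l + 1) * cexp (-(z * t)) := by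
    ext t
    rw [Complex.real_smul, pow_succ]
    ring
  simpa only [hlog_smul] using (mellin_hasDerivAt_of_isBigO_rpow
    (locallyIntegrableOn_log_pow_mul_cexp_neg_mul l z)
    (isBigO_log_pow_mul_cexp_neg_mul_atTop l hz (s.re + 1)) (lt_add_one _)
    (isBigO_log_pow_mul_cexp_neg_mul_nhdsGT_zero l z (half_pos hs)) (half_lt_self hs)).2

theorem mellin_cexp_neg_mul_ofReal {s : ℂ} (hs : 0 < s.re) {r : ℝ} (hr : 0 < r) :
    mellin (fun t : ℝ => cexp (-(r * t))) s = Gamma s * (r : ℂ) ^ (-s) := by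
  have harg : arg (r : ℂ) ≠ Real.pi := by
    rw [arg_ofReal_of_nonneg hr.le]; exact Real.pi_ne_zero.symm
  rw [mellin, funext fun t : ℝ => smul_eq_mul .., integral_cpow_mul_exp_neg_mul_Ioi hs hr,
    one_div, inv_cpow _ _ harg, cpow_neg, mul_comm]

theorem differentiableAt_mellin_cexp_neg_mul {s z : ℂ} (hs : 0 < s.re) (hz : 0 < z.re) :
    DifferentiableAt ℂ (fun ζ : ℂ => mellin (fun t : ℝ => cexp (-(ζ * t))) s) z := by
  have hcont : ∀ ζ : ℂ,
      ContinuousOn (fun t : ℝ => (t : ℂ) ^ (s - 1) * cexp (-(ζ * t))) (Ioi 0) :=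
    fun ζ => ContinuousOn.mul (fun t ht =>
      (continuousAt_ofReal_cpow_const t _ (Or.inr (ne_of_gt ht))).continuousWithinAt)
      (by fun_prop)
  have hbound_int :
      IntegrableOn (fun t : ℝ => t ^ s.re * Real.exp (-(z.re / 2) * t)) (Ioi 0) := by
    simpa only [Real.rpow_one] using
      integrableOn_rpow_mul_exp_neg_mul_rpow (by linarith) one_pos (half_pos hz)
  have hconv : MellinConvergent (fun t : ℝ => cexp (-(z * t))) s := by
    simpa using mellinConvergent_log_pow_mul_cexp_neg_mul 0 hz hs
  refine (hasDerivAt_integral_of_dominated_loc_of_deriv_le (μ := volume.restrict (Ioi 0))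
    (F := fun ζ (t : ℝ) => (t : ℂ) ^ (s - 1) * cexp (-(ζ * t)))
    (F' := fun ζ (t : ℝ) => (t : ℂ) ^ (s - 1) * (cexp (-(ζ * t)) * -t))
    (Metric.ball_mem_nhds z (half_pos hz))
    (.of_forall fun ζ => (hcont ζ).aestronglyMeasurable measurableSet_Ioi) hconv ?_ ?_
    hbound_int ?_).2.differentiableAt
  · exact (((hcont z).mul (continuous_ofReal.neg.continuousOn (s := Ioi 0)))
      |>.aestronglyMeasurable measurableSet_Ioi).congr (.of_forall fun t => mul_assoc _ _ _)
  · filter_upwards [ae_restrict_mem measurableSet_Ioi] with t (ht : 0 < t) ζ hζ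
    have hre : z.re / 2 < ζ.re := by
      have := (abs_re_le_norm (ζ - z)).trans_lt (mem_ball_iff_norm.mp hζ)
      rw [sub_re, abs_lt] at this
      linarith
    calc ‖(t : ℂ) ^ (s - 1) * (cexp (-(ζ * t)) * -t)‖
        = t ^ (s.re - 1) * t * Real.exp (-ζ.re * t) := by
          simp [norm_cpow_eq_rpow_re_of_pos ht, Complex.norm_exp, abs_of_pos ht]; ring
      _ ≤ t ^ (s.re - 1) * t * Real.exp (-(z.re / 2) * t) := by gcongr
      _ = t ^ s.re * Real.exp (-(z.re / 2) * t) := by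
          rw [← Real.rpow_add_one ht.ne']; ring_nf
  · filter_upwards [ae_restrict_mem measurableSet_Ioi] with t (ht : 0 < t) ζ _
    exact ((hasDerivAt_mul_const (t : ℂ)).neg.cexp).const_mul _

theorem mellin_cexp_neg_mul {s z : ℂ} (hs : 0 < s.re) (hz : 0 < z.re) :
    mellin (fun t : ℝ => cexp (-(z * t))) s = Gamma s * z ^ (-s) := by
  have hU : IsOpen {ζ : ℂ | 0 < ζ.re} := isOpen_lt continuous_const continuous_re
  have hmellin : AnalyticOnNhd ℂ (fun ζ : ℂ => mellin (fun t : ℝ => cexp (-(ζ * t))) s)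
      {ζ | 0 < ζ.re} :=
    DifferentiableOn.analyticOnNhd (fun ζ hζ =>
      (differentiableAt_mellin_cexp_neg_mul hs hζ).differentiableWithinAt) hU
  have hGamma : AnalyticOnNhd ℂ (fun ζ : ℂ => Gamma s * ζ ^ (-s)) {ζ | 0 < ζ.re} :=
    DifferentiableOn.analyticOnNhd (fun ζ hζ =>
      ((differentiableAt_id.cpow_const (Or.inl hζ)).const_mul _).differentiableWithinAt) hU
  have hreal : Tendsto ((↑) : ℝ → ℂ) (𝓝[>] 1) (𝓝[≠] 1) :=
    tendsto_nhdsWithin_of_tendsto_nhds_of_eventually_within _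
      (continuous_ofReal.tendsto' 1 1 ofReal_one |>.mono_left nhdsWithin_le_nhds)
      (eventually_nhdsWithin_of_forall fun r (hr : 1 < r) => by
        simpa using (ofReal_injective.ne hr.ne'))
  have hfreq : ∃ᶠ ζ in 𝓝[≠] (1 : ℂ),
      mellin (fun t : ℝ => cexp (-(ζ * t))) s = Gamma s * ζ ^ (-s) :=
    hreal.frequently (eventually_nhdsWithin_of_forall fun r (hr : r ∈ Ioi 1) =>
      mellin_cexp_neg_mul_ofReal hs (one_pos.trans hr)).frequently
  exact hmellin.eqOn_of_preconnected_of_frequently_eq hGamma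
    (convex_halfSpace_re_gt 0).isPreconnected (by simp) hfreq hz

theorem iteratedDeriv_eqOn_of_hasDerivAt {𝕜 F : Type*} [NontriviallyNormedField 𝕜]
    [NormedAddCommGroup F] [NormedSpace 𝕜 F] {U : Set 𝕜} (hU : IsOpen U) {f : 𝕜 → F}
    {g : ℕ → 𝕜 → F} (hf : EqOn f (g 0) U)
    (hg : ∀ n, ∀ x ∈ U, HasDerivAt (g n) (g (n + 1) x) x) (n : ℕ) :
    EqOn (iteratedDeriv n f) (g n) U := by
  induction n with
  | zero => simpa using hf
  | succ n ih =>
    intro x hx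
    rw [iteratedDeriv_succ, (eventuallyEq_of_mem (hU.mem_nhds hx) ih).deriv_eq]
    exact (hg n x hx).deriv

/-- Laplace integral of `x^a (log x)^l`: for `Re a > -1` and `Re z > 0`,
`∫_0^∞ x^a (log x)^l e^{-zx} dx` equals the `l`-th derivative at `a` of
`w ↦ Γ(w+1) z^{-w-1}`. -/
theorem laplace_integral_cpow_log_pow (l : ℕ) (a z : ℂ) (ha : -1 < a.re) (hz : 0 < z.re) :
    ∫ x in Set.Ioi (0 : ℝ), (x : ℂ) ^ a * (Real.log x : ℂ) ^ l * Complex.exp (-(z * x))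
      = iteratedDeriv l (fun w : ℂ => Complex.Gamma (w + 1) * z ^ (-w - 1)) a := by
  have hU : IsOpen {w : ℂ | -1 < w.re} := isOpen_lt continuous_const continuous_re
  have hshift : ∀ {w : ℂ}, -1 < w.re → 0 < (w + 1).re := fun hw => by
    rw [add_re, one_re]; linarith
  set M : ℕ → ℂ → ℂ := fun n w =>
    mellin (fun t : ℝ => (Real.log t : ℂ) ^ n * cexp (-(z * t))) (w + 1)
  have hbase : EqOn (fun w : ℂ => Gamma (w + 1) * z ^ (-w - 1)) (M 0) {w | -1 < w.re} :=
    fun w hw => by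
      simp only [M, pow_zero, one_mul]
      rw [mellin_cexp_neg_mul (hshift hw) hz, neg_add']
  have hderiv : ∀ n, ∀ w ∈ {w : ℂ | -1 < w.re}, HasDerivAt (M n) (M (n + 1) w) w :=
    fun n w hw => (hasDerivAt_mellin_log_pow_mul_cexp_neg_mul n hz (hshift hw)).comp_add_const _ _
  rw [iteratedDeriv_eqOn_of_hasDerivAt hU hbase hderiv l ha]
  simp only [M, mellin, add_sub_cancel_right, smul_eq_mul, mul_assoc]
end

section
/- (Asymptotic expansion of the half-line Fourier–Laplace transform.) Let ũ ∈ 𝓢(ℝ,ℂ) and define h(ζ) := ∫_{x ∈ (0,∞)} exp(−i·x·ζ) · ũ(x) dx for Im ζ ≤ 0. Then for every N ∈ ℕ there exists C_N > 0 such that for all ζ with Im ζ ≤ 0 and |ζ| ≥ 1: |h(ζ) − Σ_{j=0}^{N-1} ũ^{(j)}(0) / (i·ζ)^{j+1}| ≤ C_N · |ζ|^{−N−1}. -/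
/-!
Integrating by parts against `x ↦ exp (-i x ζ)`, whose modulus is at most `1` on `x ≥ 0` when
`Im ζ ≤ 0`, gives `h_v(ζ) = v(0)/(iζ) + (iζ)⁻¹ h_{v'}(ζ)` for Schwartz `v`: the boundary term at
infinity vanishes. Iterating `N` times leaves the remainder `(iζ)^{-N} h_{u^{(N)}}(ζ)`, and one more
integration by parts bounds `|h_{u^{(N)}}(ζ)|` by `(|u^{(N)}(0)| + ‖u^{(N+1)}‖₁)/|ζ|`.
-/

open MeasureTheory Complex Set Filter Topology

theorem SchwartzMap.iterate_derivCLM_apply_s17 {𝕜 F : Type*} [RCLike 𝕜] [NormedAddCommGroup F]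
    [NormedSpace ℝ F] [NormedSpace 𝕜 F] (n : ℕ) (f : SchwartzMap ℝ F) (x : ℝ) :
    ((derivCLM 𝕜 F)^[n] f) x = iteratedDeriv n f x := by
  induction n generalizing f with
  | zero => simp
  | succ n ih =>
    rw [Function.iterate_succ_apply, ih, iteratedDeriv_succ']
    rfl

noncomputable def fourierLaplaceIoi (v : ℝ → ℂ) (ζ : ℂ) : ℂ :=
  ∫ x in Ioi (0 : ℝ), cexp (-(I * x * ζ)) * v x

section FourierLaplaceIoi

variable {v v' : ℝ → ℂ} {ζ : ℂ}

lemma norm_cexp_neg_I_mul_mul_le_one {x : ℝ} (hx : 0 ≤ x) (him : ζ.im ≤ 0) :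
    ‖cexp (-(I * x * ζ))‖ ≤ 1 := by
  rw [norm_exp, Real.exp_le_one_iff]
  simpa [mul_re, mul_im] using mul_nonpos_of_nonneg_of_nonpos hx him

lemma integrableOn_cexp_neg_I_mul_mul (hv : IntegrableOn v (Ioi 0)) (him : ζ.im ≤ 0) :
    IntegrableOn (fun x : ℝ => cexp (-(I * x * ζ)) * v x) (Ioi 0) := by
  refine hv.bdd_mul (c := 1) (by fun_prop) ?_
  filter_upwards [self_mem_ae_restrict measurableSet_Ioi] with x hx
  exact norm_cexp_neg_I_mul_mul_le_one (le_of_lt hx) him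

lemma norm_fourierLaplaceIoi_le (hv : IntegrableOn v (Ioi 0)) (him : ζ.im ≤ 0) :
    ‖fourierLaplaceIoi v ζ‖ ≤ ∫ x in Ioi (0 : ℝ), ‖v x‖ := by
  refine norm_integral_le_of_norm_le hv.norm ?_
  filter_upwards [self_mem_ae_restrict measurableSet_Ioi] with x hx
  rw [norm_mul]
  exact mul_le_of_le_one_left (norm_nonneg _) (norm_cexp_neg_I_mul_mul_le_one (le_of_lt hx) him)

lemma fourierLaplaceIoi_eq_add_of_hasDerivAt (hderiv : ∀ x ∈ Ici 0, HasDerivAt v (v' x) x)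
    (hv : IntegrableOn v (Ioi 0)) (hv' : IntegrableOn v' (Ioi 0))
    (hlim : Tendsto v atTop (𝓝 0)) (him : ζ.im ≤ 0) (hζ : ζ ≠ 0) :
    fourierLaplaceIoi v ζ = v 0 / (I * ζ) + (I * ζ)⁻¹ * fourierLaplaceIoi v' ζ := by
  rw [fourierLaplaceIoi, fourierLaplaceIoi]
  set e : ℝ → ℂ := fun x => cexp (-(I * x * ζ))
  have he : ∀ x : ℝ, HasDerivAt e (-(I * ζ) * e x) x := fun x => by
    have h := (((hasDerivAt_id x).ofReal_comp.const_mul I).mul_const ζ).neg.cexp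
    simpa [e, mul_comm] using h
  have hev_lim : Tendsto (e * v) atTop (𝓝 0) := by
    refine squeeze_zero_norm' ?_ (by simpa using hlim.norm)
    filter_upwards [eventually_ge_atTop 0] with x hx
    simpa [norm_mul] using
      mul_le_of_le_one_left (norm_nonneg _) (norm_cexp_neg_I_mul_mul_le_one hx him)
  have hev_zero : Tendsto (e * v) (𝓝[>] 0) (𝓝 (v 0)) := by
    have hcont : ContinuousAt (e * v) 0 :=
      (he 0).continuousAt.mul (hderiv 0 (mem_Ici.2 le_rfl)).continuousAt
    simpa [e] using hcont.tendsto.mono_left nhdsWithin_le_nhds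
  have hev : IntegrableOn (fun x => e x * v x) (Ioi 0) := integrableOn_cexp_neg_I_mul_mul hv him
  have hparts := integral_Ioi_mul_deriv_eq_deriv_mul (fun x _ => he x)
    (fun x hx => hderiv x (Ioi_subset_Ici_self hx)) (integrableOn_cexp_neg_I_mul_mul hv' him)
    (by simp only [Pi.mul_def, mul_assoc]; exact hev.const_mul _) hev_zero hev_lim
  simp only [mul_assoc, integral_const_mul] at hparts
  have hIζ : I * ζ ≠ 0 := mul_ne_zero I_ne_zero hζ
  rw [hparts]
  field_simp
  ring

lemma fourierLaplaceIoi_schwartz_eq_add (v : SchwartzMap ℝ ℂ) (him : ζ.im ≤ 0) (hζ : ζ ≠ 0) :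
    fourierLaplaceIoi v ζ = v 0 / (I * ζ) + (I * ζ)⁻¹ * fourierLaplaceIoi (deriv v) ζ :=
  fourierLaplaceIoi_eq_add_of_hasDerivAt (fun x _ => v.hasDerivAt x) v.integrable.integrableOn
    (SchwartzMap.derivCLM ℝ ℂ v).integrable.integrableOn
    ((zero_at_infty v).mono_left atTop_le_cocompact) him hζ

lemma norm_fourierLaplaceIoi_schwartz_le (v : SchwartzMap ℝ ℂ) (him : ζ.im ≤ 0) (hζ : ζ ≠ 0) :
    ‖fourierLaplaceIoi v ζ‖ ≤ (‖v 0‖ + ∫ x in Ioi (0 : ℝ), ‖deriv v x‖) / ‖ζ‖ := by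
  have hIζ : ‖I * ζ‖ = ‖ζ‖ := by rw [norm_mul, norm_I, one_mul]
  have hderiv := norm_fourierLaplaceIoi_le
    (SchwartzMap.derivCLM ℝ ℂ v).integrable.integrableOn him
  calc ‖fourierLaplaceIoi v ζ‖
      ≤ ‖v 0‖ / ‖ζ‖ + ‖ζ‖⁻¹ * ‖fourierLaplaceIoi (deriv v) ζ‖ := by
        rw [fourierLaplaceIoi_schwartz_eq_add v him hζ, ← hIζ, ← norm_inv, ← norm_div, ← norm_mul]
        exact norm_add_le _ _
    _ ≤ ‖v 0‖ / ‖ζ‖ + ‖ζ‖⁻¹ * ∫ x in Ioi (0 : ℝ), ‖deriv v x‖ := by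
        gcongr
        exact hderiv
    _ = (‖v 0‖ + ∫ x in Ioi (0 : ℝ), ‖deriv v x‖) / ‖ζ‖ := by ring

lemma fourierLaplaceIoi_schwartz_eq_sum_add (u : SchwartzMap ℝ ℂ) (N : ℕ) (him : ζ.im ≤ 0)
    (hζ : ζ ≠ 0) :
    fourierLaplaceIoi u ζ = ∑ j ∈ Finset.range N, iteratedDeriv j u 0 / (I * ζ) ^ (j + 1)
      + ((I * ζ) ^ N)⁻¹ * fourierLaplaceIoi (iteratedDeriv N u) ζ := by
  induction N with
  | zero => simp
  | succ n ih =>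
    have hw : ⇑((SchwartzMap.derivCLM ℝ ℂ)^[n] u) = iteratedDeriv n u :=
      funext (SchwartzMap.iterate_derivCLM_apply_s17 n u)
    rw [ih, ← hw, fourierLaplaceIoi_schwartz_eq_add _ him hζ, hw, ← iteratedDeriv_succ,
      Finset.sum_range_succ]
    have hIζ : I * ζ ≠ 0 := mul_ne_zero I_ne_zero hζ
    field_simp
    ring

end FourierLaplaceIoi

/-- Asymptotic expansion of the half-line Fourier–Laplace transform of a Schwartz function:
`h(ζ) ∼ Σ_j u^{(j)}(0)/(iζ)^{j+1}` as `|ζ| → ∞`, `Im ζ ≤ 0`. -/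
theorem halfline_fourierLaplace_asymptotic (u : SchwartzMap ℝ ℂ) :
    ∀ N : ℕ, ∃ C : ℝ, 0 < C ∧ ∀ ζ : ℂ, ζ.im ≤ 0 → 1 ≤ ‖ζ‖ →
      ‖(∫ x in Set.Ioi (0 : ℝ), Complex.exp (-(Complex.I * x * ζ)) * u x) -
          ∑ j ∈ Finset.range N,
            iteratedDeriv j (fun y : ℝ => u y) 0 / (Complex.I * ζ) ^ (j + 1)‖
        ≤ C * ‖ζ‖ ^ (-(N : ℝ) - 1) := by
  intro N
  set w := (SchwartzMap.derivCLM ℝ ℂ)^[N] u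
  have hw : ⇑w = iteratedDeriv N u := funext (SchwartzMap.iterate_derivCLM_apply_s17 N u)
  set C := ‖w 0‖ + ∫ x in Ioi (0 : ℝ), ‖deriv w x‖
  refine ⟨C + 1, by positivity, fun ζ him hζ1 => ?_⟩
  have hpos : 0 < ‖ζ‖ := one_pos.trans_le hζ1
  have hζ : ζ ≠ 0 := norm_pos_iff.1 hpos
  change ‖fourierLaplaceIoi u ζ - _‖ ≤ _
  rw [fourierLaplaceIoi_schwartz_eq_sum_add u N him hζ, add_sub_cancel_left, ← hw, norm_mul,
    norm_inv, norm_pow, norm_mul, norm_I, one_mul]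
  calc (‖ζ‖ ^ N)⁻¹ * ‖fourierLaplaceIoi w ζ‖
      ≤ (‖ζ‖ ^ N)⁻¹ * (C / ‖ζ‖) := by gcongr; exact norm_fourierLaplaceIoi_schwartz_le w him hζ
    _ ≤ (C + 1) * ((‖ζ‖ ^ N)⁻¹ * ‖ζ‖⁻¹) := by
        rw [div_eq_mul_inv, mul_left_comm]
        gcongr
        linarith
    _ = (C + 1) * ‖ζ‖ ^ (-(N : ℝ) - 1) := by
        rw [Real.rpow_sub hpos, Real.rpow_neg hpos.le, Real.rpow_natCast, Real.rpow_one,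
          div_eq_mul_inv]
end
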